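/- arXiv:2406.13176 — 8 statements merged into one kernel-verified Lean document; each statement's English description precedes it below -/
import Mathlib

section
/- Let G be a graph on n vertices with m edges. If t > 0 and G cannot be made bipartite by deleting fewer than t edges (i.e., every subgraph G' of G with e(G') > m − t is non-bipartite), then the number of triangles in G is at least (n/6)·(m + t − n²/4). -/
open Finset

namespace FarAux

variable {V : Type*} [Fintype V] [DecidableEq V] (G : SimpleGraph V) [DecidableRel G.Adj]

/-- crossing edges of the cut (N(v), N(v)ᶜ) -/
def cutG (v : V) : SimpleGraph V where
  Adj x y := G.Adj x y ∧ ¬ (G.Adj v x ↔ G.Adj v y)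
  symm := ⟨fun x y ⟨h1, h2⟩ => ⟨h1.symm, fun h => h2 h.symm⟩⟩
  loopless := ⟨fun x ⟨h, _⟩ => G.loopless.irrefl x h⟩

def inG (v : V) : SimpleGraph V where
  Adj x y := G.Adj x y ∧ (G.Adj v x ∧ G.Adj v y)
  symm := ⟨fun x y ⟨h1, h2⟩ => ⟨h1.symm, h2.symm⟩⟩
  loopless := ⟨fun x ⟨h, _⟩ => G.loopless.irrefl x h⟩

def outG (v : V) : SimpleGraph V where
  Adj x y := G.Adj x y ∧ (¬ G.Adj v x ∧ ¬ G.Adj v y)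
  symm := ⟨fun x y ⟨h1, h2⟩ => ⟨h1.symm, h2.symm⟩⟩
  loopless := ⟨fun x ⟨h, _⟩ => G.loopless.irrefl x h⟩

instance (v : V) : DecidableRel (cutG G v).Adj := fun _ _ => instDecidableAnd
instance (v : V) : DecidableRel (inG G v).Adj := fun _ _ => instDecidableAnd
instance (v : V) : DecidableRel (outG G v).Adj := fun _ _ => instDecidableAnd

lemma cut_le (v : V) : cutG G v ≤ G := fun _ _ h => h.1

lemma cut_colorable (v : V) : (cutG G v).Colorable 2 := by
  have c : (cutG G v).Coloring (Fin 2) := by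
    refine SimpleGraph.Coloring.mk (fun x => if G.Adj v x then 0 else 1) ?_
    intro a b hab
    rcases hab with ⟨-, h2⟩
    by_cases ha : G.Adj v a <;> by_cases hb : G.Adj v b <;> simp_all
  simpa using c.colorable

lemma e2 (H : SimpleGraph V) [DecidableRel H.Adj] :
    2 * #H.edgeFinset = ∑ x : V, ∑ y : V, if H.Adj x y then 1 else 0 := by
  rw [SimpleGraph.two_mul_card_edgeFinset, card_filter]
  exact Fintype.sum_prod_type _

lemma partition (v : V) :
    G.edgeFinset.card = #(cutG G v).edgeFinset + #(inG G v).edgeFinset + #(outG G v).edgeFinset := by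
  have h2 : 2 * #G.edgeFinset =
      2 * #(cutG G v).edgeFinset + 2 * #(inG G v).edgeFinset + 2 * #(outG G v).edgeFinset := by
    rw [e2, e2, e2, e2, ← Finset.sum_add_distrib, ← Finset.sum_add_distrib]
    refine Finset.sum_congr rfl fun x _ => ?_
    rw [← Finset.sum_add_distrib, ← Finset.sum_add_distrib]
    refine Finset.sum_congr rfl fun y _ => ?_
    by_cases h : G.Adj x y <;> by_cases h1 : G.Adj v x <;> by_cases h2 : G.Adj v y <;>
      simp [cutG, inG, outG, h, h1, h2]
  omega

lemma ncard_eq (H : SimpleGraph V) [DecidableRel H.Adj] :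
    H.edgeSet.ncard = #H.edgeFinset := by
  rw [← SimpleGraph.coe_edgeFinset, Set.ncard_coe_finset]


def triFinset : Finset (V × V × V) :=
  univ.filter fun p => G.Adj p.1 p.2.1 ∧ G.Adj p.1 p.2.2 ∧ G.Adj p.2.1 p.2.2

lemma tri_le : #(triFinset G) ≤ 6 * #(G.cliqueFinset 3) := by
  have maps : ∀ p ∈ triFinset G, ({p.1, p.2.1, p.2.2} : Finset V) ∈ G.cliqueFinset 3 := by
    intro p hp
    simp only [triFinset, mem_filter, mem_univ, true_and] at hp
    rw [SimpleGraph.mem_cliqueFinset_iff]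
    exact SimpleGraph.is3Clique_triple_iff.2 ⟨hp.1, hp.2.1, hp.2.2⟩
  rw [card_eq_sum_card_fiberwise maps]
  have hfib : ∀ s ∈ G.cliqueFinset 3,
      #((triFinset G).filter fun p => ({p.1, p.2.1, p.2.2} : Finset V) = s) ≤ 6 := by
    intro s hs
    have hs3 : s.card = 3 := (SimpleGraph.mem_cliqueFinset_iff.1 hs).card_eq
    have h6 : s.offDiag.card = 6 := by rw [Finset.offDiag_card, hs3]
    rw [← h6]
    apply card_le_card_of_injOn (fun p => (p.1, p.2.1))
    · intro p hp
      simp only [mem_coe, mem_filter, triFinset, mem_univ, true_and] at hp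
      obtain ⟨⟨h1, h2, h3⟩, hset⟩ := hp
      rw [mem_coe, mem_offDiag]
      refine ⟨?_, ?_, h1.ne⟩
      · rw [← hset]; simp
      · rw [← hset]; simp
    · intro p hp q hq hpq
      simp only [coe_filter, Set.mem_setOf_eq, triFinset, mem_filter, mem_univ,
        true_and] at hp hq
      obtain ⟨⟨hp1, hp2, hp3⟩, hps⟩ := hp
      obtain ⟨⟨hq1, hq2, hq3⟩, hqs⟩ := hq
      obtain ⟨a, b, c⟩ := p
      obtain ⟨a', b', c'⟩ := q
      simp only [Prod.mk.injEq] at hpq ⊢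
      obtain ⟨e1, e2⟩ := hpq
      subst e1; subst e2
      refine ⟨rfl, rfl, ?_⟩
      have hc : c ∈ ({a, b, c'} : Finset V) := by
        rw [hqs, ← hps]; simp
      simp only [mem_insert, mem_singleton] at hc
      rcases hc with hc | hc | hc
      · exact absurd hc.symm hp2.ne
      · exact absurd hc.symm hp3.ne
      · exact hc
  calc ∑ s ∈ G.cliqueFinset 3,
        #((triFinset G).filter fun p => ({p.1, p.2.1, p.2.2} : Finset V) = s)
      ≤ ∑ _s ∈ G.cliqueFinset 3, 6 := Finset.sum_le_sum hfib
    _ = 6 * #(G.cliqueFinset 3) := by rw [Finset.sum_const, smul_eq_mul, mul_comm]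

lemma tri_sum : #(triFinset G) =
    ∑ v : V, ∑ x : V, ∑ y : V, if G.Adj v x ∧ G.Adj v y ∧ G.Adj x y then 1 else 0 := by
  rw [triFinset, card_filter]
  rw [Fintype.sum_prod_type]
  exact Finset.sum_congr rfl fun v _ => Fintype.sum_prod_type _

lemma in_sum : ∑ v : V, 2 * #(inG G v).edgeFinset = #(triFinset G) := by
  rw [tri_sum]
  refine Finset.sum_congr rfl fun v _ => ?_
  rw [e2]
  refine Finset.sum_congr rfl fun x _ => Finset.sum_congr rfl fun y _ =>
    if_congr ?_ rfl rfl
  constructor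
  · rintro ⟨h1, h2, h3⟩; exact ⟨h2, h3, h1⟩
  · rintro ⟨h1, h2, h3⟩; exact ⟨h3, h1, h2⟩

lemma codeg_count (x y : V) :
    (∑ v : V, if ¬G.Adj v x ∧ ¬G.Adj v y then 1 else 0) + (G.degree x + G.degree y)
      = Fintype.card V + #(G.neighborFinset x ∩ G.neighborFinset y) := by
  have h0 : (∑ v : V, if ¬G.Adj v x ∧ ¬G.Adj v y then 1 else 0)
      = #((G.neighborFinset x ∪ G.neighborFinset y)ᶜ) := by
    rw [← card_filter]
    congr 1
    ext v
    simp only [mem_filter, mem_univ, true_and, mem_compl, mem_union,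
      SimpleGraph.mem_neighborFinset, not_or]
    rw [G.adj_comm x v, G.adj_comm y v]
  have h1 := Finset.card_add_card_compl (G.neighborFinset x ∪ G.neighborFinset y)
  have h2 := Finset.card_union_add_card_inter (G.neighborFinset x) (G.neighborFinset y)
  have hdx : G.degree x = #(G.neighborFinset x) := rfl
  have hdy : G.degree y = #(G.neighborFinset y) := rfl
  omega

lemma codeg_tri :
    (∑ x : V, ∑ y : V, if G.Adj x y
      then #(G.neighborFinset x ∩ G.neighborFinset y) else 0) = #(triFinset G) := by
  have hpt : ∀ x y : V, (if G.Adj x y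
      then #(G.neighborFinset x ∩ G.neighborFinset y) else 0)
      = ∑ v : V, if G.Adj v x ∧ G.Adj v y ∧ G.Adj x y then 1 else 0 := by
    intro x y
    by_cases hxy : G.Adj x y
    · have : G.neighborFinset x ∩ G.neighborFinset y
          = univ.filter fun v => G.Adj v x ∧ G.Adj v y := by
        ext v
        simp only [mem_inter, SimpleGraph.mem_neighborFinset, mem_filter, mem_univ, true_and]
        rw [G.adj_comm x v, G.adj_comm y v]
      simp only [hxy, if_true, and_true, this, card_filter]
    · simp [hxy]
  calc (∑ x : V, ∑ y : V, if G.Adj x y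
        then #(G.neighborFinset x ∩ G.neighborFinset y) else 0)
      = ∑ x : V, ∑ y : V, ∑ v : V,
          if G.Adj v x ∧ G.Adj v y ∧ G.Adj x y then 1 else 0 :=
        Finset.sum_congr rfl fun x _ => Finset.sum_congr rfl fun y _ => hpt x y
    _ = ∑ x : V, ∑ v : V, ∑ y : V,
          if G.Adj v x ∧ G.Adj v y ∧ G.Adj x y then 1 else 0 :=
        Finset.sum_congr rfl fun x _ => Finset.sum_comm
    _ = ∑ v : V, ∑ x : V, ∑ y : V,
          if G.Adj v x ∧ G.Adj v y ∧ G.Adj x y then 1 else 0 := Finset.sum_comm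
    _ = #(triFinset G) := (tri_sum G).symm

lemma out_sum :
    (∑ v : V, 2 * #(outG G v).edgeFinset)
      + (∑ x : V, ∑ y : V, if G.Adj x y then G.degree x + G.degree y else 0)
    = 2 * #G.edgeFinset * Fintype.card V + #(triFinset G) := by
  have hswap : (∑ v : V, 2 * #(outG G v).edgeFinset)
      = ∑ x : V, ∑ y : V, ∑ v : V,
          if G.Adj x y ∧ ¬G.Adj v x ∧ ¬G.Adj v y then 1 else 0 := by
    calc (∑ v : V, 2 * #(outG G v).edgeFinset)
        = ∑ v : V, ∑ x : V, ∑ y : V,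
            if G.Adj x y ∧ ¬G.Adj v x ∧ ¬G.Adj v y then 1 else 0 :=
          Finset.sum_congr rfl fun v _ => by
            rw [e2]
            exact Finset.sum_congr rfl fun x _ => Finset.sum_congr rfl fun y _ =>
              if_congr Iff.rfl rfl rfl
      _ = ∑ x : V, ∑ v : V, ∑ y : V, _ := Finset.sum_comm
      _ = ∑ x : V, ∑ y : V, ∑ v : V, _ :=
          Finset.sum_congr rfl fun x _ => Finset.sum_comm
  rw [hswap, ← Finset.sum_add_distrib]
  have hpt : ∀ x y : V,
      (∑ v : V, if G.Adj x y ∧ ¬G.Adj v x ∧ ¬G.Adj v y then 1 else 0)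
        + (if G.Adj x y then G.degree x + G.degree y else 0)
      = (if G.Adj x y then Fintype.card V else 0)
        + (if G.Adj x y then #(G.neighborFinset x ∩ G.neighborFinset y) else 0) := by
    intro x y
    by_cases hxy : G.Adj x y
    · simp only [hxy, true_and, if_true]
      exact codeg_count G x y
    · simp [hxy]
  calc ∑ x : V, ((∑ y : V, ∑ v : V,
          if G.Adj x y ∧ ¬G.Adj v x ∧ ¬G.Adj v y then 1 else 0)
        + ∑ y : V, if G.Adj x y then G.degree x + G.degree y else 0)
      = ∑ x : V, ∑ y : V, ((if G.Adj x y then Fintype.card V else 0)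
          + (if G.Adj x y then #(G.neighborFinset x ∩ G.neighborFinset y) else 0)) := by
        refine Finset.sum_congr rfl fun x _ => ?_
        rw [← Finset.sum_add_distrib]
        exact Finset.sum_congr rfl fun y _ => hpt x y
    _ = (∑ x : V, ∑ y : V, if G.Adj x y then Fintype.card V else 0)
          + ∑ x : V, ∑ y : V,
            if G.Adj x y then #(G.neighborFinset x ∩ G.neighborFinset y) else 0 := by
        rw [← Finset.sum_add_distrib]
        exact Finset.sum_congr rfl fun x _ => Finset.sum_add_distrib
    _ = 2 * #G.edgeFinset * Fintype.card V + #(triFinset G) := by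
        rw [codeg_tri]
        congr 1
        have : ∀ x y : V, (if G.Adj x y then Fintype.card V else 0)
            = (if G.Adj x y then 1 else 0) * Fintype.card V := by
          intro x y; split <;> simp
        calc (∑ x : V, ∑ y : V, if G.Adj x y then Fintype.card V else 0)
            = ∑ x : V, ∑ y : V, (if G.Adj x y then 1 else 0) * Fintype.card V :=
              Finset.sum_congr rfl fun x _ => Finset.sum_congr rfl fun y _ => this x y
          _ = (∑ x : V, ∑ y : V, if G.Adj x y then 1 else 0) * Fintype.card V := by
              rw [Finset.sum_mul]
              exact Finset.sum_congr rfl fun x _ => (Finset.sum_mul _ _ _).symm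
          _ = 2 * #G.edgeFinset * Fintype.card V := by rw [← e2]

lemma deg_row (x : V) : (∑ y : V, if G.Adj x y then 1 else 0) = G.degree x := by
  rw [← card_filter]
  congr 1
  ext y
  simp [SimpleGraph.mem_neighborFinset]

lemma S2_eq : (∑ x : V, ∑ y : V, if G.Adj x y then G.degree x + G.degree y else 0)
    = 2 * ∑ v : V, G.degree v ^ 2 := by
  have hsplit : ∀ x y : V, (if G.Adj x y then G.degree x + G.degree y else 0)
      = (if G.Adj x y then 1 else 0) * G.degree x
        + (if G.Adj x y then 1 else 0) * G.degree y := by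
    intro x y; split <;> simp [add_comm]
  have hrow : ∀ x : V, (∑ y : V, (if G.Adj x y then 1 else 0) * G.degree x)
      = G.degree x ^ 2 := by
    intro x
    rw [← Finset.sum_mul, deg_row, sq]
  have hcol : (∑ x : V, ∑ y : V, (if G.Adj x y then 1 else 0) * G.degree y)
      = ∑ v : V, G.degree v ^ 2 := by
    rw [Finset.sum_comm]
    refine Finset.sum_congr rfl fun y _ => ?_
    rw [← Finset.sum_mul, sq]
    congr 1
    rw [← deg_row]
    exact Finset.sum_congr rfl fun x _ => if_congr (G.adj_comm _ _) rfl rfl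
  calc (∑ x : V, ∑ y : V, if G.Adj x y then G.degree x + G.degree y else 0)
      = (∑ x : V, ∑ y : V, (if G.Adj x y then 1 else 0) * G.degree x)
        + ∑ x : V, ∑ y : V, (if G.Adj x y then 1 else 0) * G.degree y := by
        rw [← Finset.sum_add_distrib]
        refine Finset.sum_congr rfl fun x _ => ?_
        rw [← Finset.sum_add_distrib]
        exact Finset.sum_congr rfl fun y _ => hsplit x y
    _ = (∑ v : V, G.degree v ^ 2) + ∑ v : V, G.degree v ^ 2 := by
        rw [hcol]
        congr 1
        exact Finset.sum_congr rfl fun x _ => hrow x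
    _ = 2 * ∑ v : V, G.degree v ^ 2 := (two_mul _).symm

end FarAux

open FarAux

/-- Supersaturation-stability: if `G` on `n` vertices with `m` edges is `t`-far from being
bipartite (every subgraph with more than `m - t` edges is non-bipartite), then `G` has at
least `(n/6)(m + t - n²/4)` triangles. -/
theorem far_from_bipartite_triangles {V : Type*} [Fintype V] [DecidableEq V]
    (G : SimpleGraph V) [DecidableRel G.Adj] (n : ℕ) (hn : Fintype.card V = n)
    (t : ℝ) (ht : 0 < t)
    (hfar : ∀ H : SimpleGraph V, H ≤ G →
      ((H.edgeSet.ncard : ℝ) > (G.edgeFinset.card : ℝ) - t) → ¬ H.Colorable 2) :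
    ((G.cliqueFinset 3).card : ℝ) ≥
      (n / 6) * ((G.edgeFinset.card : ℝ) + t - (n : ℝ) ^ 2 / 4) := by
  classical
  rcases Nat.eq_zero_or_pos n with h0 | hpos
  · simp only [h0, Nat.cast_zero, zero_div, zero_mul, ge_iff_le]
    positivity
  have hn0 : (0 : ℝ) < n := by exact_mod_cast hpos
  -- step 2 : every vertex's cut gives t ≤ in + out
  have hstep : ∀ v : V, (t : ℝ) ≤
      (#(inG G v).edgeFinset : ℝ) + #(outG G v).edgeFinset := by
    intro v
    by_contra hlt
    push_neg at hlt
    have hpart := partition G v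
    have hcutR : (((cutG G v).edgeSet.ncard : ℝ)) > (#G.edgeFinset : ℝ) - t := by
      rw [ncard_eq]
      have hc : (#G.edgeFinset : ℝ) = (#(cutG G v).edgeFinset : ℝ)
          + #(inG G v).edgeFinset + #(outG G v).edgeFinset := by
        exact_mod_cast hpart
      linarith
    exact hfar _ (cut_le G v) hcutR (cut_colorable G v)
  have hsum : (n : ℝ) * t ≤
      ∑ v : V, ((#(inG G v).edgeFinset : ℝ) + #(outG G v).edgeFinset) := by
    have h := Finset.card_nsmul_le_sum Finset.univ
      (fun v => ((#(inG G v).edgeFinset : ℝ) + #(outG G v).edgeFinset)) t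
      (fun v _ => hstep v)
    simpa [hn, nsmul_eq_mul] using h
  have h2 : 2 * (n : ℝ) * t ≤
      ((∑ v : V, 2 * #(inG G v).edgeFinset : ℕ) : ℝ)
        + ((∑ v : V, 2 * #(outG G v).edgeFinset : ℕ) : ℝ) := by
    push_cast
    rw [Finset.sum_add_distrib] at hsum
    rw [← Finset.mul_sum, ← Finset.mul_sum]
    linarith
  have hin := in_sum G
  have hout := out_sum G
  rw [hn] at hout
  have hS2 := S2_eq G
  have htri := tri_le G
  have hdeg := G.sum_degrees_eq_twice_card_edges
  set m := #G.edgeFinset with hm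
  set T := #(G.cliqueFinset 3) with hT
  set Tri := #(triFinset G) with hTri
  set D := ∑ v : V, G.degree v ^ 2 with hD
  have e1 : ((∑ v : V, 2 * #(inG G v).edgeFinset : ℕ) : ℝ) = (Tri : ℝ) := by
    exact_mod_cast congrArg Nat.cast hin
  have e2 : ((∑ v : V, 2 * #(outG G v).edgeFinset : ℕ) : ℝ)
      + ((∑ x : V, ∑ y : V, if G.Adj x y then G.degree x + G.degree y else 0 : ℕ) : ℝ)
      = 2 * (m : ℝ) * (n : ℝ) + (Tri : ℝ) := by
    exact_mod_cast congrArg Nat.cast hout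
  have e3 : ((∑ x : V, ∑ y : V, if G.Adj x y then G.degree x + G.degree y else 0 : ℕ) : ℝ)
      = 2 * (D : ℝ) := by
    exact_mod_cast congrArg Nat.cast hS2
  have e4 : (Tri : ℝ) ≤ 6 * (T : ℝ) := by exact_mod_cast htri
  have e5 : (2 * (m : ℝ)) ^ 2 ≤ (n : ℝ) * (D : ℝ) := by
    have hcs := sq_sum_le_card_mul_sum_sq (s := (Finset.univ : Finset V))
      (f := fun v => (G.degree v : ℝ))
    have hds : (∑ v : V, (G.degree v : ℝ)) = 2 * (m : ℝ) := by
      rw [← Nat.cast_sum]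
      exact_mod_cast congrArg Nat.cast hdeg
    rw [hds] at hcs
    have hDcast : ((D : ℕ) : ℝ) = ∑ v : V, ((G.degree v : ℝ)) ^ 2 := by
      rw [hD]; push_cast; rfl
    rw [hDcast]
    simpa [hn] using hcs
  have key : 2 * (n : ℝ) * t ≤ 12 * (T : ℝ) + 2 * (m : ℝ) * n - 2 * (D : ℝ) := by
    linarith
  have key2 : 2 * (n : ℝ) ^ 2 * t ≤
      12 * (T : ℝ) * n + 2 * (m : ℝ) * n ^ 2 - 2 * (D : ℝ) * n := by
    have := mul_le_mul_of_nonneg_right key (le_of_lt hn0)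
    nlinarith [this]
  rw [ge_iff_le, div_mul_eq_mul_div, div_le_iff₀ (by norm_num : (0:ℝ) < 6)]
  have goal' : 2 * (n : ℝ) * ((n : ℝ) * ((m : ℝ) + t - (n : ℝ) ^ 2 / 4))
      ≤ 2 * (n : ℝ) * ((T : ℝ) * 6) := by
    nlinarith [key2, e5, sq_nonneg (2 * (m : ℝ) - (n : ℝ) ^ 2 / 2), hn0]
  exact le_of_mul_le_mul_left (by linarith) (by positivity : (0:ℝ) < 2 * (n : ℝ))
end

section
/- Let G be a graph on n vertices with m edges. Then the number of triangles satisfies t(G) ≥ (4m/(3n))·(m − n²/4). -/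
open Finset SimpleGraph

private lemma card_six {α : Type*} [DecidableEq α] (x1 x2 x3 x4 x5 x6 : α) :
    ({x1, x2, x3, x4, x5, x6} : Finset α).card ≤ 6 := by
  refine (Finset.card_insert_le _ _).trans (Nat.succ_le_succ ?_)
  refine (Finset.card_insert_le _ _).trans (Nat.succ_le_succ ?_)
  refine (Finset.card_insert_le _ _).trans (Nat.succ_le_succ ?_)
  refine (Finset.card_insert_le _ _).trans (Nat.succ_le_succ ?_)
  refine (Finset.card_insert_le _ _).trans (Nat.succ_le_succ ?_)
  simp

/-- Moon–Moser inequality: a graph on `n` vertices with `m` edges has at least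
`(4m/(3n))·(m − n²/4)` triangles. -/
theorem moon_moser {V : Type*} [Fintype V] [DecidableEq V]
    (G : SimpleGraph V) [DecidableRel G.Adj] (n : ℕ) (hn : Fintype.card V = n) :
    ((G.cliqueFinset 3).card : ℝ) ≥
      (4 * (G.edgeFinset.card : ℝ) / (3 * n)) *
        ((G.edgeFinset.card : ℝ) - (n : ℝ) ^ 2 / 4) := by
  rcases Nat.eq_zero_or_pos n with hn0 | hnpos
  · subst hn0
    simp
  set m : ℕ := G.edgeFinset.card with hm
  -- the set of ordered triangles
  set S : Finset (V × V × V) :=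
    Finset.univ.filter (fun p => G.Adj p.1 p.2.1 ∧ G.Adj p.1 p.2.2 ∧ G.Adj p.2.1 p.2.2)
    with hS
  -- the set of ordered edges
  set A : Finset (V × V) := Finset.univ.filter (fun p => G.Adj p.1 p.2) with hA
  -- Step 1 : S.card ≤ 6 * triangles
  have step1 : S.card ≤ 6 * (G.cliqueFinset 3).card := by
    have hf : ∀ p ∈ S, ({p.1, p.2.1, p.2.2} : Finset V) ∈ G.cliqueFinset 3 := by
      rintro ⟨x, y, z⟩ hp
      simp only [hS, mem_filter] at hp
      rw [SimpleGraph.mem_cliqueFinset_iff, is3Clique_triple_iff]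
      exact hp.2
    rw [Finset.card_eq_sum_card_fiberwise hf]
    have hfib : ∀ t ∈ G.cliqueFinset 3,
        (S.filter (fun p => ({p.1, p.2.1, p.2.2} : Finset V) = t)).card ≤ 6 := by
      intro t ht
      have h3 : t.card = 3 := (SimpleGraph.mem_cliqueFinset_iff.1 ht).2
      obtain ⟨a, b, c, hab, hac, hbc, rfl⟩ := Finset.card_eq_three.1 h3
      refine (Finset.card_le_card ?_).trans
        (card_six (a,b,c) (a,c,b) (b,a,c) (b,c,a) (c,a,b) (c,b,a))
      rintro ⟨x, y, z⟩ hp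
      simp only [hS, mem_filter, mem_univ, true_and] at hp
      obtain ⟨⟨hxy, hxz, hyz⟩, heq⟩ := hp
      have hx : x ∈ ({a, b, c} : Finset V) := heq ▸ by simp
      have hy : y ∈ ({a, b, c} : Finset V) := heq ▸ by simp
      have hz : z ∈ ({a, b, c} : Finset V) := heq ▸ by simp
      simp only [mem_insert, mem_singleton] at hx hy hz ⊢
      have hxy' := hxy.ne
      have hxz' := hxz.ne
      have hyz' := hyz.ne
      simp only [Prod.mk.injEq]
      rcases hx with rfl | rfl | rfl <;> rcases hy with rfl | rfl | rfl <;>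
        rcases hz with rfl | rfl | rfl <;> simp_all
    calc ∑ t ∈ G.cliqueFinset 3,
          (S.filter (fun p => ({p.1, p.2.1, p.2.2} : Finset V) = t)).card
        ≤ ∑ _t ∈ G.cliqueFinset 3, 6 := Finset.sum_le_sum hfib
      _ = 6 * (G.cliqueFinset 3).card := by rw [Finset.sum_const, smul_eq_mul, mul_comm]
  -- fibers of S over A
  have hAf : ∀ p ∈ S, (p.1, p.2.1) ∈ A := by
    rintro ⟨x, y, z⟩ hp
    simp only [hS, mem_filter, mem_univ, true_and] at hp
    simp [hA, hp.1]
  have hScard : S.card = ∑ e ∈ A,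
      (S.filter (fun p => (p.1, p.2.1) = e)).card :=
    Finset.card_eq_sum_card_fiberwise hAf
  -- each fiber has card = |N(u) ∩ N(v)|
  have hfiber : ∀ e ∈ A, (S.filter (fun p => (p.1, p.2.1) = e)).card
      = (G.neighborFinset e.1 ∩ G.neighborFinset e.2).card := by
    rintro ⟨u, v⟩ he
    simp only [hA, mem_filter, mem_univ, true_and] at he
    refine Finset.card_bij' (fun p _ => p.2.2) (fun w _ => (u, v, w)) ?_ ?_ ?_ ?_
    · rintro ⟨x, y, z⟩ hp
      simp only [hS, mem_filter, mem_filter, mem_univ, true_and, Prod.mk.injEq] at hp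
      obtain ⟨⟨h1, h2, h3⟩, rfl, rfl⟩ := hp
      simp only [mem_inter, SimpleGraph.mem_neighborFinset]
      exact ⟨h2, h3⟩
    · intro w hw
      simp only [mem_inter, SimpleGraph.mem_neighborFinset] at hw
      simp [hS, he, hw.1, hw.2]
    · rintro ⟨x, y, z⟩ hp
      simp only [hS, mem_filter, mem_filter, mem_univ, true_and, Prod.mk.injEq] at hp
      obtain ⟨_, rfl, rfl⟩ := hp
      rfl
    · intro w hw; rfl
  -- lower bound on fibers
  have hlow : ∀ e ∈ A, G.degree e.1 + G.degree e.2
      ≤ n + (S.filter (fun p => (p.1, p.2.1) = e)).card := by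
    rintro ⟨u, v⟩ he
    rw [hfiber _ he]
    have hun : (G.neighborFinset u ∪ G.neighborFinset v).card ≤ n := by
      rw [← hn, ← Finset.card_univ]
      exact Finset.card_le_card (Finset.subset_univ _)
    have := Finset.card_union_add_card_inter (G.neighborFinset u) (G.neighborFinset v)
    simp only [SimpleGraph.card_neighborFinset_eq_degree] at this ⊢
    omega
  -- sums over A
  have hsum1 : ∑ e ∈ A, G.degree e.1 = ∑ u : V, G.degree u ^ 2 := by
    rw [hA, Finset.sum_filter, ← Finset.univ_product_univ, Finset.sum_product]
    refine Finset.sum_congr rfl fun u _ => ?_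
    rw [← Finset.sum_filter]
    rw [show Finset.univ.filter (fun v => G.Adj u v) = G.neighborFinset u from
      (SimpleGraph.neighborFinset_eq_filter G).symm]
    rw [Finset.sum_const_nat (m := G.degree u) (fun _ _ => rfl),
      SimpleGraph.card_neighborFinset_eq_degree, sq]
  have hswap : ∑ e ∈ A, G.degree e.2 = ∑ e ∈ A, G.degree e.1 := by
    apply Finset.sum_nbij' (fun p => p.swap) (fun p => p.swap)
    · rintro ⟨u, v⟩ hp
      simp only [hA, mem_filter, mem_univ, true_and] at hp ⊢
      exact hp.symm
    · rintro ⟨u, v⟩ hp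
      simp only [hA, mem_filter, mem_univ, true_and] at hp ⊢
      exact hp.symm
    · intros; rfl
    · intros; rfl
    · intros; rfl
  have hAcard : A.card = 2 * m := by
    have : A.card = ∑ u : V, G.degree u := by
      rw [hA, Finset.card_filter, ← Finset.univ_product_univ, Finset.sum_product]
      refine Finset.sum_congr rfl fun u _ => ?_
      rw [← Finset.sum_filter]
      rw [show Finset.univ.filter (fun v => G.Adj u v) = G.neighborFinset u from
        (SimpleGraph.neighborFinset_eq_filter G).symm]
      simp
    rw [this, G.sum_degrees_eq_twice_card_edges]
  -- main counting inequality
  have key : 2 * ∑ u : V, G.degree u ^ 2 ≤ 2 * m * n + S.card := by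
    have := Finset.sum_le_sum hlow
    simp only [Finset.sum_add_distrib, Finset.sum_const, smul_eq_mul] at this
    rw [hswap, hsum1, hAcard] at this
    rw [hScard]
    omega
  -- Cauchy-Schwarz
  have hCS : ((2 * m : ℕ) : ℝ) ^ 2 ≤ (n : ℝ) * ∑ u : V, (G.degree u : ℝ) ^ 2 := by
    have := sq_sum_le_card_mul_sum_sq (s := (Finset.univ : Finset V))
      (f := fun u => (G.degree u : ℝ))
    rw [Finset.card_univ, hn] at this
    rw [← G.sum_degrees_eq_twice_card_edges]
    push_cast
    exact_mod_cast this
  -- assemble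
  have h6 : 2 * ((∑ u : V, (G.degree u : ℝ) ^ 2)) ≤ 2 * m * n + 6 * (G.cliqueFinset 3).card := by
    have := key.trans (by omega : 2 * m * n + S.card ≤ 2 * m * n + 6 * (G.cliqueFinset 3).card)
    calc 2 * ∑ u : V, (G.degree u : ℝ) ^ 2
        = ((2 * ∑ u : V, G.degree u ^ 2 : ℕ) : ℝ) := by push_cast; ring
      _ ≤ ((2 * m * n + 6 * (G.cliqueFinset 3).card : ℕ) : ℝ) := by exact_mod_cast this
      _ = 2 * m * n + 6 * (G.cliqueFinset 3).card := by push_cast; ring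
  have hnR : (0:ℝ) < n := by exact_mod_cast hnpos
  rw [ge_iff_le, div_mul_eq_mul_div, div_le_iff₀ (by positivity)]
  push_cast at hCS ⊢
  nlinarith [hCS, h6, sq_nonneg ((m:ℝ))]
end

section
/- Let G be a graph with m edges and adjacency spectral radius λ. Then λ³ ≤ 3·t(G) + m·λ, where t(G) is the number of triangles of G. -/
open Finset Matrix

section BNAux

variable {V : Type*} [Fintype V] [DecidableEq V]

private lemma bn_card_triangle_triples (G : SimpleGraph V) [DecidableRel G.Adj] :
    (univ.filter fun p : V × V × V =>
        G.Adj p.1 p.2.1 ∧ G.Adj p.2.1 p.2.2 ∧ G.Adj p.2.2 p.1).card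
      = 6 * (G.cliqueFinset 3).card := by
  rw [Finset.card_eq_sum_card_fiberwise
    (f := fun p : V × V × V => ({p.1, p.2.1, p.2.2} : Finset V)) (t := G.cliqueFinset 3)]
  · rw [Finset.sum_congr rfl, Finset.sum_const, smul_eq_mul, mul_comm]
    intro s hs
    obtain ⟨a, b, c, hab, hac, hbc, rfl⟩ :=
      SimpleGraph.is3Clique_iff.1 (SimpleGraph.mem_cliqueFinset_iff.1 hs)
    have hab' := hab.ne
    have hac' := hac.ne
    have hbc' := hbc.ne
    have : (univ.filter fun p : V × V × V =>
        (G.Adj p.1 p.2.1 ∧ G.Adj p.2.1 p.2.2 ∧ G.Adj p.2.2 p.1) ∧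
          ({p.1, p.2.1, p.2.2} : Finset V) = {a, b, c})
        = {(a,b,c), (a,c,b), (b,a,c), (b,c,a), (c,a,b), (c,b,a)} := by
      ext ⟨x, y, z⟩
      simp only [mem_filter, mem_univ, true_and, mem_insert, mem_singleton, Prod.mk.injEq]
      constructor
      · rintro ⟨⟨hxy, hyz, hzx⟩, hset⟩
        have hx : x ∈ ({a, b, c} : Finset V) := by rw [← hset]; simp
        have hy : y ∈ ({a, b, c} : Finset V) := by rw [← hset]; simp
        have hz : z ∈ ({a, b, c} : Finset V) := by rw [← hset]; simp
        have hxy' := hxy.ne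
        have hyz' := hyz.ne
        have hzx' := hzx.ne
        simp only [mem_insert, mem_singleton] at hx hy hz
        rcases hx with rfl | rfl | rfl <;> rcases hy with rfl | rfl | rfl <;>
          rcases hz with rfl | rfl | rfl <;> simp_all
      · have h1 : ({b, a, c} : Finset V) = {a, b, c} := by
          ext; simp; tauto
        have h2 : ({c, a, b} : Finset V) = {a, b, c} := by
          ext; simp; tauto
        have h3 : ({a, c, b} : Finset V) = {a, b, c} := by
          ext; simp; tauto
        have h4 : ({b, c, a} : Finset V) = {a, b, c} := by
          ext; simp; tauto
        have h5 : ({c, b, a} : Finset V) = {a, b, c} := by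
          ext; simp; tauto
        rintro (⟨rfl, rfl, rfl⟩|⟨rfl, rfl, rfl⟩|⟨rfl, rfl, rfl⟩|⟨rfl, rfl, rfl⟩|⟨rfl, rfl, rfl⟩|⟨rfl, rfl, rfl⟩) <;>
          refine ⟨⟨?_, ?_, ?_⟩, ?_⟩ <;>
          first
            | exact hab | exact hab.symm | exact hac | exact hac.symm
            | exact hbc | exact hbc.symm | assumption | rfl
    rw [Finset.filter_filter, this]
    rw [show ({(a,b,c), (a,c,b), (b,a,c), (b,c,a), (c,a,b), (c,b,a)} : Finset (V × V × V)).card = 6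
      from by
        repeat rw [Finset.card_insert_of_notMem (by simp [Prod.ext_iff]; tauto)]
        simp]
  · intro p hp
    simp only [Finset.mem_coe, mem_filter, mem_univ, true_and] at hp ⊢
    obtain ⟨h1, h2, h3⟩ := hp
    rw [SimpleGraph.mem_cliqueFinset_iff, SimpleGraph.is3Clique_triple_iff]
    exact ⟨h1, h3.symm, h2⟩

private lemma bn_trace_conj (U B : Matrix V V ℝ) (h : star U * U = 1) :
    Matrix.trace (U * B * star U) = Matrix.trace B := by
  rw [Matrix.trace_mul_comm, ← Matrix.mul_assoc, h, Matrix.one_mul]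

private lemma bn_spectral_real {A : Matrix V V ℝ} (hA : A.IsHermitian) :
    A = (hA.eigenvectorUnitary : Matrix V V ℝ) * Matrix.diagonal hA.eigenvalues
        * star (hA.eigenvectorUnitary : Matrix V V ℝ) := by
  convert hA.spectral_theorem using 3
  simp [Unitary.conjStarAlgAut_apply, RCLike.ofReal_real_eq_id]

private lemma bn_trace_sq {A : Matrix V V ℝ} (hA : A.IsHermitian) :
    Matrix.trace (A * A) = ∑ i, hA.eigenvalues i ^ 2 := by
  have h1 : star (hA.eigenvectorUnitary : Matrix V V ℝ) * hA.eigenvectorUnitary = 1 :=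
    Matrix.mem_unitaryGroup_iff'.1 hA.eigenvectorUnitary.2
  set U := (hA.eigenvectorUnitary : Matrix V V ℝ)
  set D := Matrix.diagonal hA.eigenvalues
  have e1 : ∀ B C : Matrix V V ℝ,
      (U * B * star U) * (U * C * star U) = U * (B * C) * star U := by
    intro B C
    calc (U * B * star U) * (U * C * star U)
        = U * B * ((star U * U) * (C * star U)) := by simp only [Matrix.mul_assoc]
    _ = U * (B * C) * star U := by rw [h1]; simp only [Matrix.one_mul, Matrix.mul_assoc]
  have key : A * A = U * (D * D) * star U := by
    conv_lhs => rw [bn_spectral_real hA]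
    exact e1 D D
  rw [key, bn_trace_conj _ _ h1]
  simp [D, Matrix.diagonal_mul_diagonal, Matrix.trace_diagonal, sq]

private lemma bn_trace_cube {A : Matrix V V ℝ} (hA : A.IsHermitian) :
    Matrix.trace (A * A * A) = ∑ i, hA.eigenvalues i ^ 3 := by
  have h1 : star (hA.eigenvectorUnitary : Matrix V V ℝ) * hA.eigenvectorUnitary = 1 :=
    Matrix.mem_unitaryGroup_iff'.1 hA.eigenvectorUnitary.2
  set U := (hA.eigenvectorUnitary : Matrix V V ℝ)
  set D := Matrix.diagonal hA.eigenvalues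
  have hA' : A = U * D * star U := bn_spectral_real hA
  have key : A * A * A = U * (D * D * D) * star U := by
    calc A * A * A = (U * D * star U) * (U * D * star U) * (U * D * star U) := by rw [← hA']
    _ = U * (D * D * D) * star U := by
        have e1 : ∀ B C : Matrix V V ℝ,
            (U * B * star U) * (U * C * star U) = U * (B * C) * star U := by
          intro B C
          calc (U * B * star U) * (U * C * star U)
              = U * B * ((star U * U) * (C * star U)) := by
                simp only [Matrix.mul_assoc]
          _ = U * (B * C) * star U := by rw [h1]; simp only [Matrix.one_mul, Matrix.mul_assoc]
        rw [e1, e1]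
  rw [key, bn_trace_conj _ _ h1]
  simp [D, Matrix.diagonal_mul_diagonal, Matrix.trace_diagonal, pow_succ, mul_assoc, sq]

private lemma bn_trace_adj_sq (G : SimpleGraph V) [DecidableRel G.Adj] :
    Matrix.trace (G.adjMatrix ℝ * G.adjMatrix ℝ) = 2 * (G.edgeFinset.card : ℝ) := by
  have : Matrix.trace (G.adjMatrix ℝ * G.adjMatrix ℝ)
      = ∑ i, ∑ j, if G.Adj i j then (1 : ℝ) else 0 := by
    simp only [Matrix.trace, Matrix.diag, Matrix.mul_apply, SimpleGraph.adjMatrix_apply]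
    refine Finset.sum_congr rfl fun i _ => Finset.sum_congr rfl fun j _ => ?_
    by_cases h : G.Adj i j
    · simp [h, h.symm]
    · simp [h]
  rw [this]
  have hdeg : ∀ i : V, ∑ j, (if G.Adj i j then (1 : ℝ) else 0) = (G.degree i : ℝ) := by
    intro i
    rw [Finset.sum_boole, SimpleGraph.degree]
    congr 1
    congr 1
    ext j
    simp
  simp only [hdeg]
  rw [← Nat.cast_sum]
  rw [SimpleGraph.sum_degrees_eq_twice_card_edges]
  push_cast
  ring

private lemma bn_trace_adj_cube (G : SimpleGraph V) [DecidableRel G.Adj] :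
    Matrix.trace (G.adjMatrix ℝ * G.adjMatrix ℝ * G.adjMatrix ℝ)
      = ((univ.filter fun p : V × V × V =>
          G.Adj p.1 p.2.1 ∧ G.Adj p.2.1 p.2.2 ∧ G.Adj p.2.2 p.1).card : ℝ) := by
  have : Matrix.trace (G.adjMatrix ℝ * G.adjMatrix ℝ * G.adjMatrix ℝ)
      = ∑ i, ∑ j, ∑ k, if G.Adj i j ∧ G.Adj j k ∧ G.Adj k i then (1 : ℝ) else 0 := by
    simp only [Matrix.trace, Matrix.diag, Matrix.mul_apply, Finset.sum_mul, Finset.mul_sum,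
      SimpleGraph.adjMatrix_apply]
    rw [Finset.sum_comm]
    refine Finset.sum_congr rfl fun i _ => ?_
    rw [Finset.sum_comm]
    refine Finset.sum_congr rfl fun j _ => Finset.sum_congr rfl fun k _ => ?_
    by_cases h1 : G.Adj i j <;> by_cases h2 : G.Adj j k <;> by_cases h3 : G.Adj k i <;>
      simp [G.adj_comm i k, G.adj_comm j i, G.adj_comm k j, h1, h2, h3]
  rw [this, ← Finset.sum_boole]
  rw [Fintype.sum_prod_type]
  refine Finset.sum_congr rfl fun i _ => ?_
  rw [Fintype.sum_prod_type]

private lemma bn_hasEigenvalue_eigs {A : Matrix V V ℝ} (hA : A.IsHermitian) (i : V) :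
    Module.End.HasEigenvalue (Matrix.toLin' A) (hA.eigenvalues i) := by
  apply Module.End.hasEigenvalue_of_hasEigenvector (x := ⇑(hA.eigenvectorBasis i))
  constructor
  · rw [Module.End.mem_eigenspace_iff, Matrix.toLin'_apply, hA.mulVec_eigenvectorBasis]
  · intro h
    apply hA.eigenvectorBasis.toBasis.ne_zero i
    rw [OrthonormalBasis.coe_toBasis]
    ext j
    exact congrFun h j

private lemma bn_norm_one_eig {A : Matrix V V ℝ} (hA : A.IsHermitian) (i : V) :
    (⇑(hA.eigenvectorBasis i) : V → ℝ) ⬝ᵥ (⇑(hA.eigenvectorBasis i) : V → ℝ) = 1 := by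
  have h := hA.eigenvectorBasis.orthonormal.1 i
  have h2 : (inner (𝕜 := ℝ) (hA.eigenvectorBasis i) (hA.eigenvectorBasis i) : ℝ) = 1 := by
    rw [real_inner_self_eq_norm_sq, h]; norm_num
  rw [← h2, PiLp.inner_apply]
  simp [dotProduct, sq]

private lemma bn_rayleigh_bound {A : Matrix V V ℝ} (hA : A.IsHermitian) (M : ℝ)
    (hM : ∀ i, hA.eigenvalues i ≤ M) (x : V → ℝ) :
    x ⬝ᵥ (A *ᵥ x) ≤ M * (x ⬝ᵥ x) := by
  have h1 : star (hA.eigenvectorUnitary : Matrix V V ℝ) * hA.eigenvectorUnitary = 1 :=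
    Matrix.mem_unitaryGroup_iff'.1 hA.eigenvectorUnitary.2
  have h2 : (hA.eigenvectorUnitary : Matrix V V ℝ) * star (hA.eigenvectorUnitary : Matrix V V ℝ)
      = 1 := Matrix.mem_unitaryGroup_iff.1 hA.eigenvectorUnitary.2
  set U := (hA.eigenvectorUnitary : Matrix V V ℝ) with hUdef
  have hstar : star U = Uᵀ := by
    rw [Matrix.star_eq_conjTranspose]
    ext i j
    simp [Matrix.conjTranspose_apply]
  have transfer : ∀ w : V → ℝ, x ⬝ᵥ (U *ᵥ w) = (Uᵀ *ᵥ x) ⬝ᵥ w := by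
    intro w
    rw [Matrix.dotProduct_mulVec, Matrix.mulVec_transpose]
  set y := Uᵀ *ᵥ x with hy
  have hyy : y ⬝ᵥ y = x ⬝ᵥ x := by
    have : y ⬝ᵥ y = x ⬝ᵥ (U *ᵥ y) := by
      rw [transfer]
    rw [this, hy, Matrix.mulVec_mulVec, ← hstar, h2, Matrix.one_mulVec]
  have hAx : x ⬝ᵥ (A *ᵥ x) = ∑ i, hA.eigenvalues i * y i ^ 2 := by
    conv_lhs => rw [bn_spectral_real hA, ← hUdef]
    rw [hstar, ← Matrix.mulVec_mulVec, ← Matrix.mulVec_mulVec, transfer, ← hy]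
    simp only [dotProduct, Matrix.mulVec_diagonal]
    exact Finset.sum_congr rfl fun i _ => by ring
  rw [hAx, ← hyy]
  have : M * (y ⬝ᵥ y) = ∑ i, M * y i ^ 2 := by
    simp only [dotProduct, Finset.mul_sum]
    exact Finset.sum_congr rfl fun i _ => by ring
  rw [this]
  exact Finset.sum_le_sum fun i _ =>
    mul_le_mul_of_nonneg_right (hM i) (sq_nonneg _)

private lemma bn_neg_eig_le {A : Matrix V V ℝ} (hA : A.IsHermitian)
    (hpos : ∀ i j, 0 ≤ A i j) (M : ℝ) (hM : ∀ i, hA.eigenvalues i ≤ M) (i : V) :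
    -hA.eigenvalues i ≤ M := by
  set v : V → ℝ := ⇑(hA.eigenvectorBasis i) with hvdef
  have hvv : v ⬝ᵥ v = 1 := bn_norm_one_eig hA i
  have hAv : A *ᵥ v = hA.eigenvalues i • v := hA.mulVec_eigenvectorBasis i
  have hev : v ⬝ᵥ (A *ᵥ v) = hA.eigenvalues i := by
    rw [hAv, dotProduct_smul, smul_eq_mul, hvv, mul_one]
  set w : V → ℝ := fun j => |v j| with hwdef
  have hww : w ⬝ᵥ w = 1 := by
    simp only [dotProduct, hwdef, abs_mul_abs_self] at hvv ⊢
    exact hvv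
  have hb : w ⬝ᵥ (A *ᵥ w) ≤ M := by
    have := bn_rayleigh_bound hA M hM w
    rwa [hww, mul_one] at this
  have expand : ∀ u : V → ℝ, u ⬝ᵥ (A *ᵥ u) = ∑ j, ∑ k, A j k * (u j * u k) := by
    intro u
    simp only [dotProduct, Matrix.mulVec, dotProduct, Finset.mul_sum]
    exact Finset.sum_congr rfl fun j _ => Finset.sum_congr rfl fun k _ => by ring
  have hkey : -(v ⬝ᵥ (A *ᵥ v)) ≤ w ⬝ᵥ (A *ᵥ w) := by
    rw [expand v, expand w, ← Finset.sum_neg_distrib]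
    refine Finset.sum_le_sum fun j _ => ?_
    rw [← Finset.sum_neg_distrib]
    refine Finset.sum_le_sum fun k _ => ?_
    have habs : |A j k * (v j * v k)| = A j k * (w j * w k) := by
      rw [abs_mul, abs_of_nonneg (hpos j k), abs_mul]
    calc -(A j k * (v j * v k)) ≤ |A j k * (v j * v k)| := neg_le_abs _
    _ = A j k * (w j * w k) := habs
  rw [hev] at hkey
  linarith

end BNAux

/-- Bollobás–Nikiforov: if `λ` is the spectral radius (largest adjacency eigenvalue)
of a graph `G` with `m` edges, then `λ³ ≤ 3·t(G) + m·λ`. -/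
theorem bollobas_nikiforov_triangles {V : Type*} [Fintype V] [DecidableEq V]
    (G : SimpleGraph V) [DecidableRel G.Adj] (l : ℝ)
    (hl : Module.End.HasEigenvalue (Matrix.toLin' (G.adjMatrix ℝ)) l)
    (hmax : ∀ μ : ℝ, Module.End.HasEigenvalue (Matrix.toLin' (G.adjMatrix ℝ)) μ → μ ≤ l) :
    l ^ 3 ≤ 3 * ((G.cliqueFinset 3).card : ℝ) + (G.edgeFinset.card : ℝ) * l := by
  classical
  set A := G.adjMatrix ℝ with hAdef
  have hA : A.IsHermitian := by
    rw [Matrix.IsHermitian]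
    ext i j
    simp [hAdef, Matrix.conjTranspose_apply, G.adj_comm]
  rcases isEmpty_or_nonempty V with hV | hV
  · exact absurd (Submodule.eq_bot_of_subsingleton) hl
  set e := hA.eigenvalues with hedef
  set t := ((G.cliqueFinset 3).card : ℝ)
  set m := ((G.edgeFinset.card : ℝ))
  have heig : ∀ i, e i ≤ l := fun i => hmax _ (bn_hasEigenvalue_eigs hA i)
  obtain ⟨i0, hi0⟩ := Finite.exists_max e
  -- l ≤ e i0
  obtain ⟨v, hv⟩ := hl.exists_hasEigenvector
  have hv1 : A *ᵥ v = l • v := by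
    rw [← Matrix.toLin'_apply]; exact hv.apply_eq_smul
  have hvpos : 0 < v ⬝ᵥ v := by
    rcases (Finset.sum_nonneg fun i _ => mul_self_nonneg (v i)).lt_or_eq with h | h
    · exact h
    · exfalso
      apply hv.2
      ext i
      have := (Finset.sum_eq_zero_iff_of_nonneg
        (fun i _ => mul_self_nonneg (v i))).1 h.symm i (Finset.mem_univ i)
      exact mul_self_eq_zero.1 this
  have hray := bn_rayleigh_bound hA (e i0) hi0 v
  rw [hv1, dotProduct_smul, smul_eq_mul] at hray
  have hlM : l ≤ e i0 := le_of_mul_le_mul_right hray hvpos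
  have hle : l = e i0 := le_antisymm hlM (heig i0)
  have hAnn : ∀ i j, (0:ℝ) ≤ A i j := by
    intro i j
    simp only [hAdef, SimpleGraph.adjMatrix_apply]
    split <;> norm_num
  have hneg : ∀ i, -l ≤ e i := by
    intro i
    have h1 := bn_neg_eig_le hA hAnn (e i0) hi0 i
    have h2 := heig i0
    linarith
  have hsum2 : ∑ i, e i ^ 2 = 2 * m := by
    rw [← bn_trace_sq hA, bn_trace_adj_sq]
  have hsum3 : ∑ i, e i ^ 3 = 6 * t := by
    rw [← bn_trace_cube hA, bn_trace_adj_cube, bn_card_triangle_triples]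
    push_cast
    ring
  have hs2 : e i0 ^ 2 + ∑ i ∈ univ.erase i0, e i ^ 2 = 2 * m := by
    rw [Finset.add_sum_erase univ (fun i => e i ^ 2) (Finset.mem_univ i0)]
    exact hsum2
  have hs3 : e i0 ^ 3 + ∑ i ∈ univ.erase i0, e i ^ 3 = 6 * t := by
    rw [Finset.add_sum_erase univ (fun i => e i ^ 3) (Finset.mem_univ i0)]
    exact hsum3
  have hterm : -l * (∑ i ∈ univ.erase i0, e i ^ 2) ≤ ∑ i ∈ univ.erase i0, e i ^ 3 := by
    rw [Finset.mul_sum]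
    refine Finset.sum_le_sum fun i _ => ?_
    have := mul_le_mul_of_nonneg_right (hneg i) (sq_nonneg (e i))
    calc -l * e i ^ 2 ≤ e i * e i ^ 2 := this
    _ = e i ^ 3 := by ring
  rw [← hle] at hs2 hs3
  have hS2 : (∑ i ∈ univ.erase i0, e i ^ 2) = 2 * m - l ^ 2 := by linarith
  rw [hS2] at hterm
  nlinarith [hterm, hs3]
end

section
/- For every ε > 0, if G is a graph on n vertices with spectral radius λ(G) ≥ n/2 + εn, then G contains at least 32^{−1/3}·ε^{2/3}·n² triangular edges. -/
lemma conj_pow_aux {V : Type*} [Fintype V] [DecidableEq V] (U D A : Matrix V V ℝ)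
    (hU' : star U * U = 1) (hs : A = U * D * star U) (k : ℕ) :
    A ^ k = U * D ^ k * star U := by
  induction k with
  | zero =>
    have hU : U * star U = 1 := by
      rw [mul_eq_one_comm] at hU'; exact hU'
    simp [pow_zero, hU]
  | succ k ih =>
    rw [pow_succ, ih, pow_succ, hs]
    simp only [Matrix.mul_assoc]
    rw [← Matrix.mul_assoc (star U) U, hU', Matrix.one_mul]

open Matrix in
lemma trace_pow_eq {V : Type*} [Fintype V] [DecidableEq V] {A : Matrix V V ℝ}
    (hA : A.IsHermitian) (k : ℕ) :
    (A ^ k).trace = ∑ i, hA.eigenvalues i ^ k := by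
  have hD : (RCLike.ofReal ∘ hA.eigenvalues : V → ℝ) = hA.eigenvalues := by
    ext i; simp
  have hs : A = (hA.eigenvectorUnitary : Matrix V V ℝ) * Matrix.diagonal hA.eigenvalues *
      star (hA.eigenvectorUnitary : Matrix V V ℝ) := by
    have := hA.spectral_theorem
    rwa [hD] at this
  have hU' : star (hA.eigenvectorUnitary : Matrix V V ℝ) * (hA.eigenvectorUnitary : Matrix V V ℝ) = 1 :=
    (Matrix.mem_unitaryGroup_iff').mp hA.eigenvectorUnitary.2
  rw [conj_pow_aux _ _ _ hU' hs, Matrix.trace_mul_cycle, hU', Matrix.one_mul,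
    Matrix.diagonal_pow, Matrix.trace_diagonal]
  simp [Pi.pow_apply]

open Matrix in
lemma quad_form_eq {V : Type*} [Fintype V] [DecidableEq V] {A : Matrix V V ℝ}
    (hA : A.IsHermitian) (x : V → ℝ) :
    x ⬝ᵥ (A *ᵥ x) = ∑ i, hA.eigenvalues i * ((star (hA.eigenvectorUnitary : Matrix V V ℝ) *ᵥ x) i)^2
    ∧ x ⬝ᵥ x = ∑ i, ((star (hA.eigenvectorUnitary : Matrix V V ℝ) *ᵥ x) i)^2 := by
  set U : Matrix V V ℝ := (hA.eigenvectorUnitary : Matrix V V ℝ) with hUdef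
  have hU : U * star U = 1 := (Matrix.mem_unitaryGroup_iff).mp hA.eigenvectorUnitary.2
  have hU' : star U * U = 1 := (Matrix.mem_unitaryGroup_iff').mp hA.eigenvectorUnitary.2
  set c : V → ℝ := star U *ᵥ x with hc
  have hstar : star U = Uᵀ := by
    ext i j
    simp [Matrix.star_eq_conjTranspose, Matrix.conjTranspose_apply]
  have hxc : x = U *ᵥ c := by
    rw [hc, Matrix.mulVec_mulVec, hU, Matrix.one_mulVec]
  constructor
  · have hD : (RCLike.ofReal ∘ hA.eigenvalues : V → ℝ) = hA.eigenvalues := by ext i; simp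
    have hs : A = U * Matrix.diagonal hA.eigenvalues * star U := by
      have := hA.spectral_theorem; rwa [hD] at this
    have h1 : U *ᵥ (Matrix.diagonal hA.eigenvalues *ᵥ c) = A *ᵥ x := by
      rw [hc, Matrix.mulVec_mulVec, Matrix.mulVec_mulVec, ← hs]
    rw [← h1]
    have h2 : x ⬝ᵥ (U *ᵥ (Matrix.diagonal hA.eigenvalues *ᵥ c)) =
        c ⬝ᵥ (Matrix.diagonal hA.eigenvalues *ᵥ c) := by
      rw [Matrix.dotProduct_mulVec x U, ← Matrix.mulVec_transpose, ← hstar, ← hc]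
    rw [h2, dotProduct]
    apply Finset.sum_congr rfl
    intro i _
    rw [Matrix.mulVec_diagonal]
    ring
  · conv_lhs => rw [hxc]
    rw [Matrix.dotProduct_mulVec, ← Matrix.mulVec_transpose, Matrix.mulVec_mulVec,
      ← hstar, hU', Matrix.one_mulVec, dotProduct]
    apply Finset.sum_congr rfl
    intro i _
    ring

lemma hasEigenvalue_toLin'_eigenvalues {V : Type*} [Fintype V] [DecidableEq V] {A : Matrix V V ℝ}
    (hA : A.IsHermitian) (i : V) :
    Module.End.HasEigenvalue (Matrix.toLin' A) (hA.eigenvalues i) := by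
  have hv := hA.mulVec_eigenvectorBasis i
  have hv0 : (⇑(hA.eigenvectorBasis i) : V → ℝ) ≠ 0 := by
    have h0 := hA.eigenvectorBasis.orthonormal.ne_zero i
    intro h
    apply h0
    ext x
    exact congrFun h x
  exact Module.End.hasEigenvalue_of_hasEigenvector
    ⟨(Module.End.mem_eigenspace_iff).mpr (by rw [Matrix.toLin'_apply]; exact hv), hv0⟩

open Matrix in
lemma graph_spec {V : Type*} [Fintype V] [DecidableEq V] [Nonempty V]
    (G : SimpleGraph V) [DecidableRel G.Adj] :
    ∃ (μ : V → ℝ) (i₀ : V),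
      (∀ i, μ i ≤ μ i₀) ∧
      (∑ i, μ i = 0) ∧
      (∑ i, μ i ^ 2 = ((G.adjMatrix ℝ) ^ 2).trace) ∧
      (∑ i, μ i ^ 3 = ((G.adjMatrix ℝ) ^ 3).trace) ∧
      (∀ l : ℝ, Module.End.HasEigenvalue (Matrix.toLin' (G.adjMatrix ℝ)) l → l ≤ μ i₀) ∧
      (∀ i, Module.End.HasEigenvalue (Matrix.toLin' (G.adjMatrix ℝ)) (μ i)) ∧
      (∀ i, -(μ i₀) ≤ μ i) := by
  set A : Matrix V V ℝ := G.adjMatrix ℝ with hAdef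
  have hA : A.IsHermitian := by
    ext u v
    simp only [Matrix.conjTranspose_apply, hAdef, SimpleGraph.adjMatrix_apply, star_trivial]
    exact if_congr (SimpleGraph.adj_comm G v u) rfl rfl
  set μ : V → ℝ := hA.eigenvalues with hμ
  obtain ⟨i₀, -, hi₀⟩ := Finset.exists_max_image Finset.univ μ ⟨Classical.arbitrary V, Finset.mem_univ _⟩
  have hmax' : ∀ i, μ i ≤ μ i₀ := fun i => hi₀ i (Finset.mem_univ i)
  have hAnn : ∀ u v : V, 0 ≤ A u v := by
    intro u v
    simp only [hAdef, SimpleGraph.adjMatrix_apply]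
    split_ifs <;> norm_num
  -- Rayleigh upper bound
  have rayleigh : ∀ (L : ℝ), (∀ i, μ i ≤ L) → ∀ x : V → ℝ,
      x ⬝ᵥ (A *ᵥ x) ≤ L * (x ⬝ᵥ x) := by
    intro L hL x
    obtain ⟨h1, h2⟩ := quad_form_eq hA x
    rw [h1, h2, Finset.mul_sum]
    apply Finset.sum_le_sum
    intro i _
    exact mul_le_mul_of_nonneg_right (hL i) (sq_nonneg _)
  have dot_pos : ∀ x : V → ℝ, x ≠ 0 → 0 < x ⬝ᵥ x := by
    intro x hx
    obtain ⟨u, hu⟩ : ∃ u, x u ≠ 0 := by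
      by_contra h
      push_neg at h
      exact hx (funext h)
    have : (0:ℝ) < ∑ v, x v * x v := by
      apply Finset.sum_pos'
      · intro v _; exact mul_self_nonneg _
      · exact ⟨u, Finset.mem_univ u, mul_self_pos.mpr hu⟩
    simpa [dotProduct] using this
  have eig_le : ∀ l : ℝ, Module.End.HasEigenvalue (Matrix.toLin' A) l → l ≤ μ i₀ := by
    intro l hl
    obtain ⟨x, hxmem, hx0⟩ := hl.exists_hasEigenvector
    have hxe : A *ᵥ x = l • x := by
      have := Module.End.mem_eigenspace_iff.mp hxmem
      rwa [Matrix.toLin'_apply] at this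
    have h1 : x ⬝ᵥ (A *ᵥ x) = l * (x ⬝ᵥ x) := by
      rw [hxe, dotProduct_smul]; simp [smul_eq_mul]
    have h2 := rayleigh (μ i₀) hmax' x
    rw [h1] at h2
    exact le_of_mul_le_mul_right (by linarith) (dot_pos x hx0)
  refine ⟨μ, i₀, hmax', ?_, ?_, ?_, eig_le, fun i => hasEigenvalue_toLin'_eigenvalues hA i, ?_⟩
  · have := trace_pow_eq hA 1
    simp only [pow_one] at this
    rw [← this, hAdef, SimpleGraph.trace_adjMatrix]
  · exact (trace_pow_eq hA 2).symm
  · exact (trace_pow_eq hA 3).symm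
  · -- lower bound on eigenvalues
    intro i
    set v : V → ℝ := ⇑(hA.eigenvectorBasis i) with hv
    have hev : A *ᵥ v = μ i • v := hA.mulVec_eigenvectorBasis i
    have hv0 : v ≠ 0 := by
      have h0 := hA.eigenvectorBasis.orthonormal.ne_zero i
      intro h
      apply h0
      ext x
      exact congrFun h x
    set w : V → ℝ := fun u => |v u| with hw
    have hww : w ⬝ᵥ w = v ⬝ᵥ v := by
      simp [dotProduct, hw, abs_mul_abs_self]
    have expand : ∀ y : V → ℝ, y ⬝ᵥ (A *ᵥ y) = ∑ u, ∑ j, y u * (A u j * y j) := by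
      intro y
      simp [dotProduct, Matrix.mulVec, Finset.mul_sum]
    have hlow : -(w ⬝ᵥ (A *ᵥ w)) ≤ v ⬝ᵥ (A *ᵥ v) := by
      have hsum : ∑ u, ∑ j, -(w u * (A u j * w j)) ≤ ∑ u, ∑ j, v u * (A u j * v j) := by
        apply Finset.sum_le_sum
        intro u _
        apply Finset.sum_le_sum
        intro j _
        have habs : |v u * (A u j * v j)| = w u * (A u j * w j) := by
          rw [abs_mul, abs_mul, abs_of_nonneg (hAnn u j)]
        calc -(w u * (A u j * w j)) = -|v u * (A u j * v j)| := by rw [habs]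
        _ ≤ v u * (A u j * v j) := neg_abs_le _
      rw [expand v, expand w]
      simpa using hsum
    have h1 : v ⬝ᵥ (A *ᵥ v) = μ i * (v ⬝ᵥ v) := by
      rw [hev, dotProduct_smul, smul_eq_mul]
    have h2 : w ⬝ᵥ (A *ᵥ w) ≤ μ i₀ * (w ⬝ᵥ w) := rayleigh _ hmax' w
    have hp := dot_pos v hv0
    have key : -(μ i₀) * (v ⬝ᵥ v) ≤ μ i * (v ⬝ᵥ v) := by
      rw [hww] at h2
      nlinarith
    exact le_of_mul_le_mul_right key hp

open Matrix in
lemma trace_sq_adj {V : Type*} [Fintype V] [DecidableEq V] (G : SimpleGraph V)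
    [DecidableRel G.Adj] :
    ((G.adjMatrix ℝ) ^ 2).trace = ∑ u, (G.degree u : ℝ) := by
  rw [pow_two, Matrix.trace]
  apply Finset.sum_congr rfl
  intro u _
  rw [Matrix.diag_apply, Matrix.mul_apply]
  have h1 : ∀ v, G.adjMatrix ℝ u v * G.adjMatrix ℝ v u = G.adjMatrix ℝ u v := by
    intro v
    by_cases h : G.Adj u v
    · simp [h, h.symm]
    · simp [h]
  rw [Finset.sum_congr rfl (fun v _ => h1 v)]
  simp [SimpleGraph.adjMatrix_apply, SimpleGraph.neighborFinset_eq_filter, SimpleGraph.degree,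
    Finset.sum_boole]
  rw [Finset.card_filter]; push_cast
  refine Finset.sum_congr rfl fun v _ => ?_
  simp [SimpleGraph.adjMatrix_apply]

open Matrix in
lemma trace_cube_adj {V : Type*} [Fintype V] [DecidableEq V] (G : SimpleGraph V)
    [DecidableRel G.Adj] :
    ((G.adjMatrix ℝ) ^ 3).trace
      = ∑ u, ∑ v, ∑ w, G.adjMatrix ℝ u v * G.adjMatrix ℝ v w * G.adjMatrix ℝ w u := by
  rw [pow_succ, pow_two, Matrix.trace]
  simp only [Matrix.diag_apply, Matrix.mul_apply, Finset.sum_mul]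
  rw [Finset.sum_comm]
  refine Finset.sum_congr rfl fun y _ => Finset.sum_congr rfl fun x _ =>
    Finset.sum_congr rfl fun i _ => by ring

open Matrix in
lemma cube_trace_lower {V : Type*} [Fintype V] [DecidableEq V] (G : SimpleGraph V)
    [DecidableRel G.Adj] :
    2 * (∑ u, (G.degree u : ℝ)^2) - (Fintype.card V : ℝ) * (∑ u, (G.degree u : ℝ))
      ≤ ((G.adjMatrix ℝ)^3).trace := by
  set A := G.adjMatrix ℝ with hAdef
  have hrow : ∀ u, ∑ v, A u v = (G.degree u : ℝ) := by
    intro u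
    simp [hAdef, SimpleGraph.adjMatrix_apply, SimpleGraph.degree,
      SimpleGraph.neighborFinset_eq_filter, Finset.sum_boole]
  have hsymm : ∀ u w : V, A w u = A u w := by
    intro u w
    simp only [hAdef, SimpleGraph.adjMatrix_apply]
    exact if_congr (SimpleGraph.adj_comm G w u) rfl rfl
  have hcol : ∀ u, ∑ w, A w u = (G.degree u : ℝ) := by
    intro u
    rw [← hrow u]
    exact Finset.sum_congr rfl fun w _ => hsymm u w
  have key : ∀ u v w : V, A u v * A v w + A u v * A w u - A u v ≤ A u v * A v w * A w u := by
    intro u v w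
    simp only [hAdef, SimpleGraph.adjMatrix_apply]
    by_cases h1 : G.Adj u v <;> by_cases h2 : G.Adj v w <;> by_cases h3 : G.Adj w u <;>
      simp [h1, h2, h3]
  have step1 : ∀ u v, ∑ w, (A u v * A v w + A u v * A w u - A u v)
      = A u v * (G.degree v : ℝ) + A u v * (G.degree u : ℝ)
        - A u v * (Fintype.card V : ℝ) := by
    intro u v
    rw [Finset.sum_sub_distrib, Finset.sum_add_distrib, ← Finset.mul_sum, ← Finset.mul_sum,
      hrow v, hcol u, Finset.sum_const, Finset.card_univ]
    simp [nsmul_eq_mul]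
    ring
  have e1 : ∑ u, ∑ v, A u v * (G.degree v : ℝ) = ∑ v, (G.degree v : ℝ)^2 := by
    rw [Finset.sum_comm]
    refine Finset.sum_congr rfl fun v _ => ?_
    rw [← Finset.sum_mul, hcol v]
    ring
  have e2 : ∑ u, ∑ v, A u v * (G.degree u : ℝ) = ∑ u, (G.degree u : ℝ)^2 := by
    refine Finset.sum_congr rfl fun u _ => ?_
    rw [← Finset.sum_mul, hrow u]
    ring
  have e3 : ∑ u, ∑ v, A u v * (Fintype.card V : ℝ)
      = (∑ u, (G.degree u : ℝ)) * (Fintype.card V : ℝ) := by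
    rw [Finset.sum_mul]
    refine Finset.sum_congr rfl fun u _ => ?_
    rw [← Finset.sum_mul, hrow u]
  rw [trace_cube_adj]
  calc 2 * (∑ u, (G.degree u : ℝ)^2) - (Fintype.card V : ℝ) * (∑ u, (G.degree u : ℝ))
      = ∑ u, ∑ v, (A u v * (G.degree v : ℝ) + A u v * (G.degree u : ℝ)
        - A u v * (Fintype.card V : ℝ)) := by
        simp only [Finset.sum_add_distrib, Finset.sum_sub_distrib, e1, e2, e3]
        ring
    _ = ∑ u, ∑ v, ∑ w, (A u v * A v w + A u v * A w u - A u v) := by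
        refine Finset.sum_congr rfl fun u _ => Finset.sum_congr rfl fun v _ => (step1 u v).symm
    _ ≤ ∑ u, ∑ v, ∑ w, A u v * A v w * A w u := by
        refine Finset.sum_le_sum fun u _ => Finset.sum_le_sum fun v _ =>
          Finset.sum_le_sum fun w _ => key u v w

def triSub {V : Type*} (G : SimpleGraph V) : SimpleGraph V where
  Adj u v := G.Adj u v ∧ ∃ w, G.Adj u w ∧ G.Adj v w
  symm := by
    constructor
    intro u v h
    obtain ⟨h1, w, h2, h3⟩ := h
    exact ⟨h1.symm, w, h3, h2⟩
  loopless := by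
    constructor
    intro u h
    exact G.irrefl h.1

instance triSubDec {V : Type*} [Fintype V] (G : SimpleGraph V) [DecidableRel G.Adj] :
    DecidableRel (triSub G).Adj := fun u v =>
  inferInstanceAs (Decidable (G.Adj u v ∧ ∃ w, G.Adj u w ∧ G.Adj v w))

lemma triSub_edgeSet {V : Type*} (G : SimpleGraph V) :
    {e ∈ G.edgeSet | ∃ v, ∀ x ∈ e, G.Adj v x} = (triSub G).edgeSet := by
  ext e
  induction e using Sym2.ind with
  | _ u v =>
    simp only [Set.mem_setOf_eq, SimpleGraph.mem_edgeSet, Sym2.mem_iff, triSub]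
    constructor
    · rintro ⟨h, w, hw⟩
      exact ⟨h, w, (hw u (Or.inl rfl)).symm, (hw v (Or.inr rfl)).symm⟩
    · rintro ⟨h, w, h1, h2⟩
      refine ⟨h, w, ?_⟩
      rintro x (rfl | rfl)
      · exact h1.symm
      · exact h2.symm

open Matrix in
lemma cube_trace_mono {V : Type*} [Fintype V] [DecidableEq V] (G : SimpleGraph V)
    [DecidableRel G.Adj] :
    ((G.adjMatrix ℝ) ^ 3).trace ≤ (((triSub G).adjMatrix ℝ) ^ 3).trace := by
  rw [trace_cube_adj, trace_cube_adj]
  refine Finset.sum_le_sum fun u _ => Finset.sum_le_sum fun v _ =>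
    Finset.sum_le_sum fun w _ => ?_
  simp only [SimpleGraph.adjMatrix_apply]
  by_cases h1 : G.Adj u v
  · by_cases h2 : G.Adj v w
    · by_cases h3 : G.Adj w u
      · have g1 : (triSub G).Adj u v := ⟨h1, w, h3.symm, h2⟩
        have g2 : (triSub G).Adj v w := ⟨h2, u, h1.symm, h3⟩
        have g3 : (triSub G).Adj w u := ⟨h3, v, h2.symm, h1⟩
        simp [h1, h2, h3, g1, g2, g3]
      · simp only [h3, if_false, mul_zero]
        split_ifs <;> norm_num
    · simp only [h2, if_false, zero_mul, mul_zero]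
      split_ifs <;> norm_num
  · simp only [h1, if_false, zero_mul]
    split_ifs <;> norm_num

open Matrix in
lemma cube_trace_nonneg {V : Type*} [Fintype V] [DecidableEq V] (G : SimpleGraph V)
    [DecidableRel G.Adj] :
    0 ≤ ((G.adjMatrix ℝ) ^ 3).trace := by
  rw [trace_cube_adj]
  refine Finset.sum_nonneg fun u _ => Finset.sum_nonneg fun v _ =>
    Finset.sum_nonneg fun w _ => ?_
  simp only [SimpleGraph.adjMatrix_apply]
  by_cases h1 : G.Adj u v <;> by_cases h2 : G.Adj v w <;> by_cases h3 : G.Adj w u <;>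
    simp [h1, h2, h3]

set_option maxHeartbeats 2000000 in
/-- If `ε > 0` and `G` on `n` vertices has spectral radius `λ(G) ≥ n/2 + εn`, then `G`
contains at least `32^{-1/3}·ε^{2/3}·n²` triangular edges. -/
theorem spectral_density_triangular_edges {V : Type*} [Fintype V] [DecidableEq V]
    (G : SimpleGraph V) [DecidableRel G.Adj] (n : ℕ) (hn : Fintype.card V = n)
    (ε : ℝ) (hε : 0 < ε) (l : ℝ)
    (hl : Module.End.HasEigenvalue (Matrix.toLin' (G.adjMatrix ℝ)) l)
    (hmax : ∀ μ : ℝ, Module.End.HasEigenvalue (Matrix.toLin' (G.adjMatrix ℝ)) μ → μ ≤ l)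
    (hbig : l ≥ (n : ℝ) / 2 + ε * n) :
    (({e ∈ G.edgeSet | ∃ v, ∀ x ∈ e, G.Adj v x}.ncard : ℝ)) ≥
      (32 : ℝ) ^ (-(1 : ℝ) / 3) * ε ^ ((2 : ℝ) / 3) * (n : ℝ) ^ 2 := by
  classical
  -- V is nonempty
  obtain ⟨x0, -, hx0⟩ := hl.exists_hasEigenvector
  haveI hne : Nonempty V := by
    by_contra h
    rw [not_nonempty_iff] at h
    exact hx0 (funext fun v => (h.false v).elim)
  have hn1 : 0 < n := hn ▸ Fintype.card_pos
  have hnR : (0:ℝ) < n := by exact_mod_cast hn1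
  -- spectral data for G
  obtain ⟨μ, i₀, hmaxμ, hsum0, hsum2, hsum3, heigle, heig, hmin⟩ := graph_spec G
  have hlμ : μ i₀ = l := le_antisymm (hmax _ (heig i₀)) (heigle l hl)
  set P : ℝ := ∑ u, (G.degree u : ℝ) with hP
  set S : ℝ := ∑ u, (G.degree u : ℝ)^2 with hS
  set W : ℝ := ((G.adjMatrix ℝ) ^ 3).trace with hW
  have hsum2' : ∑ i, μ i ^ 2 = P := by rw [hsum2, trace_sq_adj]
  have hl0 : 0 < l := by
    have h0 : (0:ℝ) < (n:ℝ)/2 + ε * n := by positivity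
    linarith
  -- key spectral inequality : W + l * P ≥ 2 l^3
  have key1 : 2 * l^3 ≤ W + l * P := by
    have expand : W + l * P = ∑ i, (μ i ^ 3 + l * μ i ^ 2) := by
      rw [Finset.sum_add_distrib, ← hsum3, ← Finset.mul_sum, hsum2']
    have hterm : ∀ i ∈ Finset.univ, (0:ℝ) ≤ μ i ^ 3 + l * μ i ^ 2 := by
      intro i _
      have h1 := hmin i
      rw [hlμ] at h1
      nlinarith [sq_nonneg (μ i)]
    have hsingle := Finset.single_le_sum hterm (Finset.mem_univ i₀)
    rw [hlμ] at hsingle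
    rw [expand]
    nlinarith
  -- degree sum bounds
  have cheb : P^2 ≤ (n:ℝ) * S := by
    have := sq_sum_le_card_mul_sum_sq (s := (Finset.univ : Finset V))
      (f := fun u => (G.degree u : ℝ))
    simpa [Finset.card_univ, hn] using this
  have moon : 2 * S - (n:ℝ) * P ≤ W := by
    have := cube_trace_lower G
    rwa [hn] at this
  have hP0 : 0 ≤ P := Finset.sum_nonneg fun u _ => by positivity
  -- main lower bound on W
  have hWlow : ε * (n:ℝ)^3 / 2 ≤ W := by
    by_cases hcase : P ≤ (n:ℝ)^2/2 + ε * n^2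
    · -- use key1
      have hll : (n:ℝ)/2 + ε * n ≤ l := hbig
      have hpos : (0:ℝ) ≤ (n:ℝ)/2 + ε * n := by positivity
      have hsq : ((n:ℝ)/2 + ε * n)^2 ≤ l^2 := by
        nlinarith [mul_le_mul hll hll hpos hl0.le]
      have hl2 : (n:ℝ)^2/4 + ε * n^2 ≤ l^2 := by nlinarith [sq_nonneg (ε * (n:ℝ))]
      have h3 : ε * n^2 / 2 ≤ l^2 - P/2 := by linarith
      have hln2 : (n:ℝ)/2 ≤ l := by
        have : (0:ℝ) ≤ ε * n := by positivity
        linarith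
      have c1 : ε*n^2/2 * (2*l) ≤ (l^2 - P/2) * (2*l) :=
        mul_le_mul_of_nonneg_right h3 (by positivity)
      have c2 : 2*l^3 - l*P ≤ W := by linarith
      have c4 : ε*n^2*((n:ℝ)/2) ≤ ε*n^2*l :=
        mul_le_mul_of_nonneg_left hln2 (by positivity)
      nlinarith [c1, c2, c4]
    · push_neg at hcase
      have hm := mul_le_mul_of_nonneg_left moon hnR.le
      have h4 : 2 * P^2 - (n:ℝ)^2 * P ≤ (n:ℝ) * W := by nlinarith [cheb, hm]
      have hPb : 2*ε*n^2 ≤ 2*P - (n:ℝ)^2 := by linarith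
      have hprod : ((n:ℝ)^2/2 + ε*n^2) * (2*ε*n^2) ≤ P * (2*P - n^2) :=
        mul_le_mul hcase.le hPb (by positivity) hP0
      have h6 : ε * (n:ℝ)^4 ≤ (n:ℝ) * W := by nlinarith [hprod, sq_nonneg (ε*(n:ℝ)^2)]
      have h7 : ε * (n:ℝ)^3 ≤ W := by
        have := (mul_le_mul_iff_right₀ hnR).mp (show (n:ℝ)*(ε*n^3) ≤ (n:ℝ)*W by linarith)
        linarith
      have h8 : (0:ℝ) ≤ ε * n^3 := by positivity
      linarith
  -- triangular subgraph
  obtain ⟨ν, j₀, hmaxν, hνsum0, hνsum2, hνsum3, -, -, -⟩ := graph_spec (triSub G)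
  set P' : ℝ := (((triSub G).adjMatrix ℝ) ^ 2).trace with hP'
  set W' : ℝ := (((triSub G).adjMatrix ℝ) ^ 3).trace with hW'
  have hWW' : W ≤ W' := cube_trace_mono G
  have hW'0 : 0 ≤ W' := cube_trace_nonneg (triSub G)
  have hP'0 : 0 ≤ P' := by
    rw [← hνsum2]
    exact Finset.sum_nonneg fun i _ => sq_nonneg _
  have hν0 : 0 ≤ ν j₀ := by
    have h1 : (0:ℝ) = ∑ i, ν i := hνsum0.symm
    have h2 : ∑ i, ν i ≤ ∑ _i : V, ν j₀ := Finset.sum_le_sum fun i _ => hmaxν i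
    rw [Finset.sum_const, Finset.card_univ, hn, nsmul_eq_mul] at h2
    nlinarith
  have hνsq : ν j₀ ^ 2 ≤ P' := by
    rw [← hνsum2]
    exact Finset.single_le_sum (fun i _ => sq_nonneg (ν i)) (Finset.mem_univ j₀)
  have hW'le : W' ≤ ν j₀ * P' := by
    rw [← hνsum3, ← hνsum2, Finset.mul_sum]
    refine Finset.sum_le_sum fun i _ => ?_
    nlinarith [sq_nonneg (ν i), hmaxν i]
  have hW'sq : W'^2 ≤ P'^3 := by
    have h1 : W'^2 ≤ (ν j₀ * P')^2 := by nlinarith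
    have h2 : (ν j₀ * P')^2 = ν j₀^2 * P'^2 := by ring
    nlinarith [sq_nonneg P']
  -- identify the edge count
  set x : ℝ := ({e ∈ G.edgeSet | ∃ v, ∀ x ∈ e, G.Adj v x}.ncard : ℝ) with hx
  have hxcard : {e ∈ G.edgeSet | ∃ v, ∀ x ∈ e, G.Adj v x}.ncard
      = (triSub G).edgeFinset.card := by
    rw [triSub_edgeSet, ← SimpleGraph.coe_edgeFinset, Set.ncard_coe_finset]
  have hP'x : P' = 2 * x := by
    rw [hP', trace_sq_adj, hx, hxcard]
    rw [← Nat.cast_sum]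
    rw [SimpleGraph.sum_degrees_eq_twice_card_edges]
    push_cast
    ring
  have hx0' : 0 ≤ x := by rw [hx]; positivity
  -- final arithmetic
  have hcube : ε^2 * n^6 / 32 ≤ x^3 := by
    have hW0 : (0:ℝ) ≤ W := le_trans (by positivity) hWlow
    have hWsq : (ε * n^3 / 2)^2 ≤ W^2 := pow_le_pow_left₀ (by positivity) hWlow 2
    have h8 : W^2 ≤ 8 * x^3 := by
      calc W^2 ≤ W'^2 := pow_le_pow_left₀ hW0 hWW' 2
        _ ≤ P'^3 := hW'sq
        _ = 8 * x^3 := by rw [hP'x]; ring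
    have hexp : (ε * n^3 / 2)^2 = ε^2 * n^6 / 4 := by ring
    linarith [hWsq, h8, hexp ▸ hWsq]
  set R : ℝ := (32 : ℝ) ^ (-(1 : ℝ) / 3) * ε ^ ((2 : ℝ) / 3) * (n : ℝ) ^ 2 with hR
  have hR0 : 0 ≤ R := by
    rw [hR]
    have := Real.rpow_nonneg (by norm_num : (0:ℝ) ≤ 32) (-(1:ℝ)/3)
    have := Real.rpow_nonneg hε.le ((2:ℝ)/3)
    positivity
  have hR3 : R^3 = ε^2 * n^6 / 32 := by
    rw [hR, mul_pow, mul_pow, ← Real.rpow_natCast ((32:ℝ) ^ (-(1:ℝ)/3)) 3,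
      ← Real.rpow_natCast (ε ^ ((2:ℝ)/3)) 3, ← Real.rpow_mul (by norm_num : (0:ℝ) ≤ 32),
      ← Real.rpow_mul hε.le]
    have e1 : (-(1:ℝ)/3) * ((3:ℕ):ℝ) = -1 := by norm_num
    have e2 : ((2:ℝ)/3) * ((3:ℕ):ℝ) = 2 := by norm_num
    rw [e1, e2, Real.rpow_neg_one, Real.rpow_two]
    ring
  have : R ≤ x := by
    apply le_of_pow_le_pow_left₀ (by norm_num : (3:ℕ) ≠ 0) hx0'
    rw [hR3]
    exact hcube
  exact this
end

section
/- If G is a graph on n vertices with m = n²/4 − q edges (q a real number) and G has at most t triangles, then G has a bipartite spanning subgraph with at least m − (6t/n + q) edges; in particular, G can be made bipartite by removing at most 6t/n + q edges. -/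
open Finset

section BipAux

variable {V : Type*} [DecidableEq V]

private lemma pair_finset_eq' {x y x' y' : V} (h : ({x, y} : Finset V) = {x', y'}) :
    s(x, y) = s(x', y') := by
  have hx : x' ∈ ({x, y} : Finset V) := by rw [h]; simp
  have hy : y' ∈ ({x, y} : Finset V) := by rw [h]; simp
  have hx2 : x ∈ ({x', y'} : Finset V) := by rw [← h]; simp
  have hy2 : y ∈ ({x', y'} : Finset V) := by rw [← h]; simp
  simp only [Finset.mem_insert, Finset.mem_singleton] at hx hy hx2 hy2
  rw [Sym2.eq_iff]
  rcases hx with h1 | h1 <;> rcases hy with h2 | h2 <;> rcases hx2 with h3 | h3 <;>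
    rcases hy2 with h4 | h4 <;> tauto

private def pairFinset' : Sym2 V → Finset V :=
  Sym2.lift ⟨fun x y => ({x, y} : Finset V),
    fun x y => by simp only []; rw [Finset.pair_comm]⟩

@[simp] private lemma pairFinset'_mk (x y : V) : pairFinset' s(x, y) = {x, y} := rfl

variable [Fintype V] (G : SimpleGraph V) [DecidableRel G.Adj] (u : V)

private def inG : SimpleGraph V where
  Adj x y := G.Adj x y ∧ G.Adj u x ∧ G.Adj u y
  symm := ⟨fun _ _ ⟨h, hx, hy⟩ => ⟨h.symm, hy, hx⟩⟩
  loopless := ⟨fun x ⟨h, _, _⟩ => G.irrefl h⟩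

private def outG : SimpleGraph V where
  Adj x y := G.Adj x y ∧ ¬G.Adj u x ∧ ¬G.Adj u y
  symm := ⟨fun _ _ ⟨h, hx, hy⟩ => ⟨h.symm, hy, hx⟩⟩
  loopless := ⟨fun x ⟨h, _, _⟩ => G.irrefl h⟩

private def crossG : SimpleGraph V where
  Adj x y := G.Adj x y ∧ (G.Adj u x ↔ ¬G.Adj u y)
  symm := ⟨fun _ _ ⟨h, hxy⟩ => ⟨h.symm, by tauto⟩⟩
  loopless := ⟨fun x ⟨h, _⟩ => G.irrefl h⟩

private instance : DecidableRel (inG G u).Adj := fun _ _ => inferInstanceAs (Decidable (_ ∧ _))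
private instance : DecidableRel (outG G u).Adj := fun _ _ => inferInstanceAs (Decidable (_ ∧ _))
private instance : DecidableRel (crossG G u).Adj := fun _ _ => inferInstanceAs (Decidable (_ ∧ _))

private lemma edge_subset' :
    G.edgeFinset ⊆ (inG G u).edgeFinset ∪ (outG G u).edgeFinset ∪ (crossG G u).edgeFinset := by
  intro e
  induction e using Sym2.ind with
  | _ x y =>
    simp only [SimpleGraph.mem_edgeFinset, SimpleGraph.mem_edgeSet, Finset.mem_union]
    intro h
    by_cases hx : G.Adj u x <;> by_cases hy : G.Adj u y <;>
      simp [inG, outG, crossG, SimpleGraph.mem_edgeSet, h, hx, hy]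

private lemma card_inG_le' :
    (inG G u).edgeFinset.card ≤ ((G.cliqueFinset 3).filter (fun s => u ∈ s)).card := by
  apply Finset.card_le_card_of_injOn (fun e => insert u (pairFinset' e))
  · intro e he
    induction e using Sym2.ind with
    | _ x y =>
      simp only [Finset.mem_coe, SimpleGraph.mem_edgeFinset, SimpleGraph.mem_edgeSet] at he
      simp only [inG] at he
      obtain ⟨hxy, hx, hy⟩ := he
      simp only [pairFinset'_mk, Finset.mem_coe, Finset.mem_filter, SimpleGraph.mem_cliqueFinset_iff]
      exact ⟨SimpleGraph.is3Clique_triple_iff.2 ⟨hx, hy, hxy⟩, by simp⟩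
  · intro e he e' he' h
    induction e using Sym2.ind with
    | _ x y =>
      induction e' using Sym2.ind with
      | _ x' y' =>
        simp only [SimpleGraph.mem_edgeFinset, SimpleGraph.mem_edgeSet,
          Finset.mem_coe] at he he'
        simp only [inG] at he he'
        have hux : u ∉ ({x, y} : Finset V) := by
          simp only [Finset.mem_insert, Finset.mem_singleton]
          rintro (rfl | rfl)
          · exact G.irrefl he.2.1
          · exact G.irrefl he.2.2
        have hux' : u ∉ ({x', y'} : Finset V) := by
          simp only [Finset.mem_insert, Finset.mem_singleton]
          rintro (rfl | rfl)
          · exact G.irrefl he'.2.1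
          · exact G.irrefl he'.2.2
        simp only [pairFinset'_mk] at h
        have := congrArg (fun s => Finset.erase s u) h
        simp only [Finset.erase_insert hux, Finset.erase_insert hux'] at this
        exact pair_finset_eq' this

private lemma sum_Tu' : ∑ u : V, ((G.cliqueFinset 3).filter (fun s => u ∈ s)).card
    = 3 * (G.cliqueFinset 3).card := by
  simp_rw [Finset.card_filter]
  rw [Finset.sum_comm]
  rw [Finset.sum_congr rfl (fun s hs => ?_), Finset.sum_const, smul_eq_mul, mul_comm]
  have h3 : s.card = 3 := (SimpleGraph.mem_cliqueFinset_iff.1 hs).2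
  calc (∑ u : V, if u ∈ s then 1 else 0) = ∑ u ∈ univ.filter (· ∈ s), 1 := by
        rw [Finset.sum_filter]
    _ = 3 := by
        rw [Finset.sum_const, smul_eq_mul, mul_one]
        rw [show univ.filter (· ∈ s) = s from by ext v; simp, h3]

private lemma sum_B' : ∑ u : V, ∑ v ∈ (G.neighborFinset u)ᶜ, G.degree v
    = ∑ v : V, G.degree v * (Fintype.card V - G.degree v) := by
  have step : ∀ u : V, ∑ v ∈ (G.neighborFinset u)ᶜ, G.degree v
      = ∑ v : V, if ¬ G.Adj u v then G.degree v else 0 := by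
    intro u
    rw [← Finset.sum_filter]
    congr 1
    ext v; simp [SimpleGraph.mem_neighborFinset]
  simp_rw [step]
  rw [Finset.sum_comm]
  refine Finset.sum_congr rfl (fun v _ => ?_)
  rw [← Finset.sum_filter, Finset.sum_const, smul_eq_mul]
  have : univ.filter (fun u => ¬ G.Adj u v) = (G.neighborFinset v)ᶜ := by
    ext u; simp [SimpleGraph.mem_neighborFinset, SimpleGraph.adj_comm]
  rw [this, Finset.card_compl, SimpleGraph.card_neighborFinset_eq_degree, mul_comm]

private lemma sum_deg_B' :
    2 * (outG G u).edgeFinset.card + (crossG G u).edgeFinset.card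
      ≤ ∑ v ∈ (G.neighborFinset u)ᶜ, G.degree v := by
  set B := (G.neighborFinset u)ᶜ with hB
  have h1 : 2 * (outG G u).edgeFinset.card = ∑ v ∈ B, (outG G u).degree v := by
    rw [← SimpleGraph.sum_degrees_eq_twice_card_edges]
    symm
    apply Finset.sum_subset (Finset.subset_univ _)
    intro v _ hv
    simp only [hB, Finset.mem_compl, SimpleGraph.mem_neighborFinset, not_not] at hv
    rw [← SimpleGraph.card_neighborFinset_eq_degree]
    convert Finset.card_empty
    ext w
    simp only [SimpleGraph.mem_neighborFinset, Finset.notMem_empty, iff_false]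
    rintro ⟨-, hv', -⟩
    exact hv' hv
  have h2 : (crossG G u).edgeFinset.card ≤ ∑ v ∈ B, (crossG G u).degree v := by
    have hd : ∀ v : V, (crossG G u).degree v
        = ((crossG G u).edgeFinset.filter (fun e => v ∈ e)).card := by
      intro v
      rw [← SimpleGraph.card_incidenceFinset_eq_degree,
        SimpleGraph.incidenceFinset_eq_filter]
    simp_rw [hd, Finset.card_filter]
    rw [Finset.sum_comm]
    calc (crossG G u).edgeFinset.card
        = ∑ e ∈ (crossG G u).edgeFinset, 1 := by rw [Finset.sum_const, smul_eq_mul, mul_one]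
      _ ≤ _ := by
          apply Finset.sum_le_sum
          intro e he
          induction e using Sym2.ind with
          | _ x y =>
            simp only [SimpleGraph.mem_edgeFinset, SimpleGraph.mem_edgeSet] at he
            simp only [crossG] at he
            obtain ⟨hxy, hiff⟩ := he
            obtain ⟨w, hwB, hwe⟩ : ∃ w, w ∈ B ∧ w ∈ s(x, y) := by
              by_cases hx : G.Adj u x
              · exact ⟨y, by simp [hB, SimpleGraph.mem_neighborFinset, hiff.1 hx], by simp⟩
              · exact ⟨x, by simp [hB, SimpleGraph.mem_neighborFinset, hx], by simp⟩
            have := Finset.single_le_sum (f := fun v => if v ∈ s(x, y) then 1 else 0)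
              (fun i _ => Nat.zero_le _) hwB
            simpa [hwe] using this
  have h3 : ∀ v ∈ B, (outG G u).degree v + (crossG G u).degree v ≤ G.degree v := by
    intro v hv
    simp only [hB, Finset.mem_compl, SimpleGraph.mem_neighborFinset] at hv
    rw [← SimpleGraph.card_neighborFinset_eq_degree, ← SimpleGraph.card_neighborFinset_eq_degree,
      ← SimpleGraph.card_neighborFinset_eq_degree]
    rw [← Finset.card_union_of_disjoint]
    · apply Finset.card_le_card
      intro w hw
      simp only [Finset.mem_union, SimpleGraph.mem_neighborFinset] at hw
      simp only [outG, crossG] at hw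
      simp only [SimpleGraph.mem_neighborFinset]
      tauto
    · rw [Finset.disjoint_left]
      intro w hw hw'
      simp only [SimpleGraph.mem_neighborFinset] at hw hw'
      simp only [outG, crossG] at hw hw'
      tauto
  calc 2 * (outG G u).edgeFinset.card + (crossG G u).edgeFinset.card
      ≤ ∑ v ∈ B, (outG G u).degree v + ∑ v ∈ B, (crossG G u).degree v := by
        rw [h1]; exact Nat.add_le_add_left h2 _
    _ = ∑ v ∈ B, ((outG G u).degree v + (crossG G u).degree v) := (Finset.sum_add_distrib).symm
    _ ≤ ∑ v ∈ B, G.degree v := Finset.sum_le_sum h3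

private lemma crossG_le' : crossG G u ≤ G := fun _ _ h => h.1

private lemma crossG_colorable' : (crossG G u).Colorable 2 := by
  refine ⟨SimpleGraph.Coloring.mk (fun v => if G.Adj u v then 0 else 1) ?_⟩
  rintro x y ⟨-, hiff⟩
  by_cases hx : G.Adj u x
  · simp [hx, hiff.1 hx]
  · have hy : G.Adj u y := by tauto
    simp [hx, hy]

end BipAux

/-- If `G` on `n` vertices has `m = n²/4 − q` edges and at most `t` triangles, then `G`
has a bipartite spanning subgraph with at least `m − (6t/n + q)` edges; i.e. `G` can be
made bipartite by removing at most `6t/n + q` edges. -/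
theorem bipartite_subgraph_of_few_triangles {V : Type*} [Fintype V] [DecidableEq V]
    (G : SimpleGraph V) [DecidableRel G.Adj] (n : ℕ) (hn : Fintype.card V = n)
    (q t : ℝ) (hm : (G.edgeFinset.card : ℝ) = (n : ℝ) ^ 2 / 4 - q)
    (ht : ((G.cliqueFinset 3).card : ℝ) ≤ t) :
    ∃ H : SimpleGraph V, H ≤ G ∧ H.Colorable 2 ∧
      ((H.edgeSet.ncard : ℝ)) ≥ (G.edgeFinset.card : ℝ) - (6 * t / n + q) := by
  rcases Nat.eq_zero_or_pos n with hn0 | hnpos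
  · -- empty case
    subst hn0
    have hVe : IsEmpty V := Fintype.card_eq_zero_iff.1 hn
    have hedges : G.edgeFinset = ∅ := by
      ext e
      induction e using Sym2.ind with
      | _ x y => exact isEmptyElim x
    refine ⟨⊥, bot_le, ⟨SimpleGraph.Coloring.mk (fun v => isEmptyElim v)
      (fun {a} _ _ => isEmptyElim a)⟩, ?_⟩
    have hq : q = 0 := by
      rw [hedges] at hm
      simpa using hm.symm
    simp [hedges, SimpleGraph.edgeSet_bot, hq]
  · -- main case
    have hVne : Nonempty V := Fintype.card_pos_iff.1 (hn ▸ hnpos)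
    set m := G.edgeFinset.card with hmdef
    set T := (G.cliqueFinset 3).card with hTdef
    set F : V → ℕ := fun u =>
      2 * ((G.cliqueFinset 3).filter (fun s => u ∈ s)).card
        + ∑ v ∈ (G.neighborFinset u)ᶜ, G.degree v with hFdef
    have hFsum : ∑ u : V, F u
        = 6 * T + ∑ v : V, G.degree v * (n - G.degree v) := by
      rw [hFdef]
      simp only []
      rw [Finset.sum_add_distrib, ← Finset.mul_sum, sum_Tu' G, sum_B' G, hn]
      ring
    obtain ⟨u, -, hu⟩ : ∃ u ∈ (univ : Finset V), n * F u ≤ ∑ u' : V, F u' := by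
      apply Finset.exists_le_of_sum_le Finset.univ_nonempty
      rw [← Finset.mul_sum, Finset.sum_const, smul_eq_mul, Finset.card_univ, hn]
    -- per-u inequality over ℕ
    have hkey : 2 * m ≤ F u + (crossG G u).edgeFinset.card := by
      have e1 := Finset.card_le_card (edge_subset' G u)
      have e2 := Finset.card_union_le ((inG G u).edgeFinset ∪ (outG G u).edgeFinset)
        ((crossG G u).edgeFinset)
      have e3 := Finset.card_union_le ((inG G u).edgeFinset) ((outG G u).edgeFinset)
      have e4 := card_inG_le' G u
      have e5 := sum_deg_B' G u
      rw [hFdef]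
      simp only []
      omega
    refine ⟨crossG G u, crossG_le' G u, crossG_colorable' G u, ?_⟩
    have hncard : (crossG G u).edgeSet.ncard = (crossG G u).edgeFinset.card := by
      rw [SimpleGraph.edgeFinset]
      exact Set.ncard_eq_toFinset_card' _
    rw [hncard]
    -- real arithmetic
    have hN : (0:ℝ) < (n:ℝ) := by exact_mod_cast hnpos
    have hdle : ∀ v : V, G.degree v ≤ n := by
      intro v
      rw [← hn]
      exact (G.degree_lt_card_verts v).le
    have hHS : ∑ v : V, G.degree v = 2 * m := SimpleGraph.sum_degrees_eq_twice_card_edges G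
    set S2 : ℝ := ∑ v : V, (G.degree v : ℝ)^2 with hS2
    have hHSR : (∑ v : V, (G.degree v : ℝ)) = 2 * (m:ℝ) := by
      exact_mod_cast congrArg (Nat.cast : ℕ → ℝ) hHS
    have hterm : ∀ v : V, ((G.degree v * (n - G.degree v) : ℕ) : ℝ)
        = (n:ℝ) * (G.degree v : ℝ) - (G.degree v : ℝ)^2 := by
      intro v
      rw [Nat.cast_mul, Nat.cast_sub (hdle v)]
      ring
    have hScast : ((∑ v : V, G.degree v * (n - G.degree v) : ℕ) : ℝ)
        = 2 * m * n - S2 := by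
      calc ((∑ v : V, G.degree v * (n - G.degree v) : ℕ) : ℝ)
          = ∑ v : V, ((G.degree v * (n - G.degree v) : ℕ) : ℝ) := Nat.cast_sum _ _
        _ = ∑ v : V, ((n:ℝ) * (G.degree v : ℝ) - (G.degree v : ℝ)^2) :=
            Finset.sum_congr rfl (fun v _ => hterm v)
        _ = 2 * m * n - S2 := by
            rw [Finset.sum_sub_distrib, ← Finset.mul_sum, hHSR, hS2]
            ring
    have hCS : (2 * (m:ℝ))^2 ≤ (n:ℝ) * S2 := by
      have := sq_sum_le_card_mul_sum_sq (s := (univ : Finset V))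
        (f := fun v => (G.degree v : ℝ))
      rw [hHSR, Finset.card_univ, hn] at this
      exact this
    set C := ((crossG G u).edgeFinset.card : ℝ) with hC
    have hkeyR : 2 * (m:ℝ) ≤ (F u : ℝ) + C := by rw [hC]; exact_mod_cast hkey
    have huR : (n:ℝ) * (F u:ℝ) ≤ 6 * (T:ℝ) + (2*(m:ℝ)*(n:ℝ) - S2) := by
      rw [hFsum] at hu
      have h' : ((n * F u : ℕ) : ℝ)
          ≤ ((6 * T + ∑ v : V, G.degree v * (n - G.degree v) : ℕ) : ℝ) := by
        exact_mod_cast hu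
      rw [Nat.cast_add, hScast] at h'
      push_cast at h'
      linarith
    have htR : (T:ℝ) ≤ t := ht
    have s2 : (n:ℝ) * (2*(m:ℝ) - C) ≤ 6*t + 2*(m:ℝ)*(n:ℝ) - S2 := by
      have s1 : (n:ℝ) * (2*(m:ℝ) - C) ≤ (n:ℝ) * (F u:ℝ) :=
        mul_le_mul_of_nonneg_left (by linarith) hN.le
      linarith
    have s3 : (n:ℝ) * ((n:ℝ) * (2*(m:ℝ) - C)) ≤ (n:ℝ) * (6*t + 2*(m:ℝ)*(n:ℝ) - S2) :=
      mul_le_mul_of_nonneg_left s2 hN.le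
    have s4 : (n:ℝ)*(n:ℝ)*(2*(m:ℝ) - C) ≤ 6*t*(n:ℝ) + 2*(m:ℝ)*(n:ℝ)*(n:ℝ) - 4*(m:ℝ)^2 := by
      nlinarith [s3, hCS]
    have hq : q = (n:ℝ)^2/4 - (m:ℝ) := by linarith
    have hdiv : (n:ℝ)*(n:ℝ)*(6*t/(n:ℝ)) = 6*t*(n:ℝ) := by
      field_simp
    have hfin : (n:ℝ)*(n:ℝ)*((m:ℝ) - (6*t/(n:ℝ) + q)) ≤ (n:ℝ)*(n:ℝ)*C := by
      have expand : (n:ℝ)*(n:ℝ)*((m:ℝ) - (6*t/(n:ℝ) + q))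
          = (n:ℝ)*(n:ℝ)*(m:ℝ) - 6*t*(n:ℝ) - (n:ℝ)*(n:ℝ)*q := by
        rw [mul_sub, mul_add, hdiv]
        ring
      rw [expand, hq]
      nlinarith [s4, sq_nonneg (2*(m:ℝ) - (n:ℝ)*(n:ℝ)/2)]
    have := le_of_mul_le_mul_left hfin (mul_pos hN hN)
    linarith
end

section
/- Let n ≥ 4 be even and let K⁺ be the graph obtained from the complete bipartite graph K_{n/2+1, n/2−1} by adding one edge inside the part of size n/2+1. Then λ(K⁺) > n/2 = λ(T_{n,2}). -/
noncomputable def Kw (m a : ℕ) : ℝ := if a < m+1 then (m:ℝ) else (m:ℝ)+1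

def KC (m a b : ℕ) : Prop := a ≠ b ∧ (((a < m+1 ∧ m+1 ≤ b) ∨ (a ≤ 1 ∧ b ≤ 1)) ∨ ((b < m+1 ∧ m+1 ≤ a) ∨ (b ≤ 1 ∧ a ≤ 1)))

instance (m a b : ℕ) : Decidable (KC m a b) := by unfold KC; infer_instance

noncomputable def KF (m a b : ℕ) : ℝ := (if KC m a b then (1:ℝ) else 0) * Kw m b * Kw m a

lemma sum_split (m : ℕ) (hm : 2 ≤ m) (f : ℕ → ℝ) :
    ∑ a ∈ Finset.range (2*m), f a =
      ∑ a ∈ Finset.Ico 0 (m+1), f a + ∑ a ∈ Finset.Ico (m+1) (2*m), f a := by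
  rw [Finset.range_eq_Ico, ← Finset.sum_Ico_consecutive f (Nat.zero_le (m+1)) (by omega)]

lemma cast_sub_one (m : ℕ) (hm : 2 ≤ m) : ((2*m - (m+1) : ℕ) : ℝ) = (m:ℝ) - 1 := by
  have h : (2*m - (m+1)) = m - 1 := by omega
  rw [h, Nat.cast_sub (by omega : 1 ≤ m)]; simp

lemma sum_w_sq (m : ℕ) (hm : 2 ≤ m) :
    ∑ a ∈ Finset.range (2*m), Kw m a * Kw m a
      = ((m:ℝ)+1)*(m:ℝ)^2 + ((m:ℝ)-1)*((m:ℝ)+1)^2 := by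
  rw [sum_split m hm]
  have e1 : ∀ a ∈ Finset.Ico 0 (m+1), Kw m a * Kw m a = (m:ℝ)*(m:ℝ) := by
    intro a ha; rw [Finset.mem_Ico] at ha
    unfold Kw; rw [if_pos (by omega : a < m+1)]
  have e2 : ∀ a ∈ Finset.Ico (m+1) (2*m), Kw m a * Kw m a = ((m:ℝ)+1)*((m:ℝ)+1) := by
    intro a ha; rw [Finset.mem_Ico] at ha
    unfold Kw; rw [if_neg (by omega : ¬ a < m+1)]
  rw [Finset.sum_congr rfl e1, Finset.sum_congr rfl e2, Finset.sum_const,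
    Finset.sum_const, Nat.card_Ico, Nat.card_Ico, nsmul_eq_mul, nsmul_eq_mul,
    cast_sub_one m hm]
  push_cast; ring
lemma sum_KF (m : ℕ) (hm : 2 ≤ m) :
    ∑ a ∈ Finset.range (2*m), ∑ b ∈ Finset.range (2*m), KF m a b
      = 2*(m:ℝ)^2 + 2*(m:ℝ)*((m:ℝ)-1)*((m:ℝ)+1)^2 := by
  have hI1card : (Finset.Ico 0 (m+1)).card = m+1 := by rw [Nat.card_Ico]; omega
  have hI2cast : ((Finset.Ico (m+1) (2*m)).card : ℝ) = (m:ℝ) - 1 := by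
    rw [Nat.card_Ico]; exact cast_sub_one m hm
  have r11 : ∑ a ∈ Finset.Ico 0 (m+1), ∑ b ∈ Finset.Ico 0 (m+1), KF m a b
      = 2*(m:ℝ)^2 := by
    have e : ∀ a ∈ Finset.Ico 0 (m+1), ∑ b ∈ Finset.Ico 0 (m+1), KF m a b
        = (if a = 0 then (m:ℝ)*(m:ℝ) else 0) + (if a = 1 then (m:ℝ)*(m:ℝ) else 0) := by
      intro a ha; rw [Finset.mem_Ico] at ha
      have e2 : ∀ b ∈ Finset.Ico 0 (m+1), KF m a b
          = (if b = 1 then (if a = 0 then (m:ℝ)*(m:ℝ) else 0) else 0)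
            + (if b = 0 then (if a = 1 then (m:ℝ)*(m:ℝ) else 0) else 0) := by
        intro b hb; rw [Finset.mem_Ico] at hb
        unfold KF Kw
        rw [if_pos (by omega : a < m+1), if_pos (by omega : b < m+1)]
        have hiff : KC m a b ↔ ((a = 0 ∧ b = 1) ∨ (a = 1 ∧ b = 0)) := by unfold KC; omega
        rw [if_congr hiff rfl rfl]
        split_ifs
        all_goals (first | ring1 | (exfalso; omega) | (exfalso; tauto))
      rw [Finset.sum_congr rfl e2, Finset.sum_add_distrib,
        Finset.sum_ite_eq' (Finset.Ico 0 (m+1)) 1 (fun _ => if a = 0 then (m:ℝ)*(m:ℝ) else 0),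
        Finset.sum_ite_eq' (Finset.Ico 0 (m+1)) 0 (fun _ => if a = 1 then (m:ℝ)*(m:ℝ) else 0),
        if_pos (show (1:ℕ) ∈ Finset.Ico 0 (m+1) by rw [Finset.mem_Ico]; omega),
        if_pos (show (0:ℕ) ∈ Finset.Ico 0 (m+1) by rw [Finset.mem_Ico]; omega)]
    rw [Finset.sum_congr rfl e, Finset.sum_add_distrib,
      Finset.sum_ite_eq' (Finset.Ico 0 (m+1)) 0 (fun _ => (m:ℝ)*(m:ℝ)),
      Finset.sum_ite_eq' (Finset.Ico 0 (m+1)) 1 (fun _ => (m:ℝ)*(m:ℝ)),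
      if_pos (show (0:ℕ) ∈ Finset.Ico 0 (m+1) by rw [Finset.mem_Ico]; omega),
      if_pos (show (1:ℕ) ∈ Finset.Ico 0 (m+1) by rw [Finset.mem_Ico]; omega)]
    ring
  have r12 : ∑ a ∈ Finset.Ico 0 (m+1), ∑ b ∈ Finset.Ico (m+1) (2*m), KF m a b
      = ((m:ℝ)+1)*(((m:ℝ)-1)*(((m:ℝ)+1)*(m:ℝ))) := by
    have e : ∀ a ∈ Finset.Ico 0 (m+1), ∑ b ∈ Finset.Ico (m+1) (2*m), KF m a b
        = ((m:ℝ)-1)*(((m:ℝ)+1)*(m:ℝ)) := by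
      intro a ha; rw [Finset.mem_Ico] at ha
      have e2 : ∀ b ∈ Finset.Ico (m+1) (2*m), KF m a b = ((m:ℝ)+1)*(m:ℝ) := by
        intro b hb; rw [Finset.mem_Ico] at hb
        unfold KF Kw
        rw [if_pos (by omega : a < m+1), if_neg (by omega : ¬ b < m+1),
          if_pos (by unfold KC; omega)]
        ring
      rw [Finset.sum_congr rfl e2, Finset.sum_const, nsmul_eq_mul, hI2cast]
    rw [Finset.sum_congr rfl e, Finset.sum_const, nsmul_eq_mul, hI1card]
    push_cast; ring
  have r21 : ∑ a ∈ Finset.Ico (m+1) (2*m), ∑ b ∈ Finset.Ico 0 (m+1), KF m a b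
      = ((m:ℝ)-1)*(((m:ℝ)+1)*((m:ℝ)*((m:ℝ)+1))) := by
    have e : ∀ a ∈ Finset.Ico (m+1) (2*m), ∑ b ∈ Finset.Ico 0 (m+1), KF m a b
        = ((m:ℝ)+1)*((m:ℝ)*((m:ℝ)+1)) := by
      intro a ha; rw [Finset.mem_Ico] at ha
      have e2 : ∀ b ∈ Finset.Ico 0 (m+1), KF m a b = (m:ℝ)*((m:ℝ)+1) := by
        intro b hb; rw [Finset.mem_Ico] at hb
        unfold KF Kw
        rw [if_neg (by omega : ¬ a < m+1), if_pos (by omega : b < m+1),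
          if_pos (by unfold KC; omega)]
        ring
      rw [Finset.sum_congr rfl e2, Finset.sum_const, nsmul_eq_mul, hI1card]
      push_cast; ring
    rw [Finset.sum_congr rfl e, Finset.sum_const, nsmul_eq_mul, hI2cast]
  have r22 : ∑ a ∈ Finset.Ico (m+1) (2*m), ∑ b ∈ Finset.Ico (m+1) (2*m), KF m a b = 0 := by
    apply Finset.sum_eq_zero; intro a ha
    apply Finset.sum_eq_zero; intro b hb
    rw [Finset.mem_Ico] at ha hb
    unfold KF
    rw [if_neg (by unfold KC; omega)]
    ring
  rw [sum_split m hm, Finset.sum_congr rfl (fun a _ => sum_split m hm (KF m a)),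
    Finset.sum_congr rfl (fun a _ => sum_split m hm (KF m a)),
    Finset.sum_add_distrib, Finset.sum_add_distrib, r11, r12, r21, r22]
  ring

open scoped Classical in
/-- For even `n ≥ 4`, the graph `K⁺` obtained from `K_{n/2+1, n/2−1}` (parts
`{v : v < n/2+1}` and its complement in `Fin n`) by adding the edge `{0,1}` inside the
part of size `n/2+1` has spectral radius greater than `n/2 = λ(T_{n,2})`. -/
theorem spectral_radius_Kplus_even (n : ℕ) (hn : 4 ≤ n) (heven : Even n)
    (G : SimpleGraph (Fin n))
    (hG : G = SimpleGraph.fromRel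
      (fun u v => (u.val < n / 2 + 1 ∧ n / 2 + 1 ≤ v.val) ∨ (u.val ≤ 1 ∧ v.val ≤ 1)))
    (l : ℝ)
    (hl : Module.End.HasEigenvalue (Matrix.toLin' (G.adjMatrix ℝ)) l)
    (hmax : ∀ μ : ℝ, Module.End.HasEigenvalue (Matrix.toLin' (G.adjMatrix ℝ)) μ → μ ≤ l) :
    l > (n : ℝ) / 2 := by
  classical
  set m : ℕ := n / 2 with hm
  have hm2 : 2 ≤ m := by omega
  have hnm : n = 2 * m := by
    obtain ⟨k, hk⟩ := heven; omega
  set A : Matrix (Fin n) (Fin n) ℝ := G.adjMatrix ℝ with hA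
  have hherm : A.IsHermitian := by
    simp [Matrix.IsHermitian, hA, SimpleGraph.transpose_adjMatrix]
  set T : EuclideanSpace ℝ (Fin n) →ₗ[ℝ] EuclideanSpace ℝ (Fin n) := Matrix.toEuclideanLin A with hT
  have hsym : T.IsSymmetric := Matrix.isHermitian_iff_isSymmetric.1 hherm
  haveI : Nonempty (Fin n) := ⟨⟨0, by omega⟩⟩
  haveI : Nontrivial (EuclideanSpace ℝ (Fin n)) := by infer_instance
  have heig := hsym.hasEigenvalue_iSup_of_finiteDimensional
  set μ : ℝ := (⨆ x : { x : EuclideanSpace ℝ (Fin n) // x ≠ 0 },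
      RCLike.re (inner ℝ (T x) (x : EuclideanSpace ℝ (Fin n)) : ℝ)
        / ‖(x : EuclideanSpace ℝ (Fin n))‖ ^ 2 : ℝ) with hμ
  have heig' : Module.End.HasEigenvalue (Matrix.toLin' A) μ := by
    obtain ⟨v, hv⟩ := heig.exists_hasEigenvector
    refine Module.End.hasEigenvalue_of_hasEigenvector (x := v) ⟨?_, fun h => hv.2 (by simpa using congrArg (WithLp.toLp 2) h)⟩
    rw [Module.End.mem_eigenspace_iff]
    exact congrArg WithLp.ofLp hv.apply_eq_smul
  have hμl : μ ≤ l := hmax μ heig'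
  -- boundedness of the Rayleigh quotient
  set T' : EuclideanSpace ℝ (Fin n) →L[ℝ] EuclideanSpace ℝ (Fin n) :=
    LinearMap.toContinuousLinearMap T with hT'
  have hbdd : BddAbove (Set.range fun x : { x : EuclideanSpace ℝ (Fin n) // x ≠ 0 } =>
      RCLike.re (inner ℝ (T x) (x : EuclideanSpace ℝ (Fin n)) : ℝ)
        / ‖(x : EuclideanSpace ℝ (Fin n))‖ ^ 2) := by
    refine ⟨‖T'‖, ?_⟩
    rintro y ⟨x, rfl⟩
    have hx : (0:ℝ) < ‖(x : EuclideanSpace ℝ (Fin n))‖ ^ 2 :=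
      pow_pos (norm_pos_iff.mpr x.2) 2
    rw [div_le_iff₀ hx]
    have h1 : RCLike.re (inner ℝ (T x) (x : EuclideanSpace ℝ (Fin n)) : ℝ)
        = (inner ℝ (T x) (x : EuclideanSpace ℝ (Fin n)) : ℝ) := rfl
    rw [h1]
    calc (inner ℝ (T x) (x : EuclideanSpace ℝ (Fin n)) : ℝ)
        ≤ ‖T (x : EuclideanSpace ℝ (Fin n))‖ * ‖(x : EuclideanSpace ℝ (Fin n))‖ :=
          real_inner_le_norm _ _
      _ = ‖T' (x : EuclideanSpace ℝ (Fin n))‖ * ‖(x : EuclideanSpace ℝ (Fin n))‖ := rfl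
      _ ≤ (‖T'‖ * ‖(x : EuclideanSpace ℝ (Fin n))‖) * ‖(x : EuclideanSpace ℝ (Fin n))‖ := by
          have := T'.le_opNorm (x : EuclideanSpace ℝ (Fin n))
          nlinarith [norm_nonneg (x : EuclideanSpace ℝ (Fin n))]
      _ = ‖T'‖ * ‖(x : EuclideanSpace ℝ (Fin n))‖ ^ 2 := by ring
  -- the test vector
  set w : Fin n → ℝ := fun i => Kw m i.val with hw
  set x₀ : EuclideanSpace ℝ (Fin n) := (WithLp.equiv 2 (Fin n → ℝ)).symm w with hx₀def
  have hx₀ : x₀ ≠ 0 := by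
    intro h
    have h0 := congrFun (congrArg (WithLp.equiv 2 (Fin n → ℝ)) h) ⟨0, by omega⟩
    simp only [hx₀def, Equiv.apply_symm_apply, hw, Kw] at h0
    rw [if_pos (by omega : (0:ℕ) < m + 1)] at h0
    have hm0 : (m:ℝ) ≠ 0 := Nat.cast_ne_zero.2 (by omega)
    change (m:ℝ) = 0 at h0
    exact hm0 h0
  have hle : RCLike.re (inner ℝ (T x₀) (x₀ : EuclideanSpace ℝ (Fin n)) : ℝ) / ‖x₀‖ ^ 2 ≤ μ := by
    rw [hμ]
    exact le_ciSup hbdd ⟨x₀, hx₀⟩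
  have hTx₀ : T x₀ = (WithLp.equiv 2 (Fin n → ℝ)).symm (A.mulVec w) := by
    rw [hT, hx₀def]
    rfl
  have hinner : (inner ℝ (T x₀) (x₀ : EuclideanSpace ℝ (Fin n)) : ℝ)
      = ∑ i : Fin n, (A.mulVec w) i * w i := by
    rw [hTx₀, hx₀def]
    simp only [PiLp.inner_apply, RCLike.inner_apply, conj_trivial,
      WithLp.equiv_symm_apply, WithLp.ofLp_toLp, mul_comm]
  have hnorm : ‖x₀‖ ^ 2 = ∑ i : Fin n, w i * w i := by
    rw [← real_inner_self_eq_norm_sq, hx₀def]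
    simp only [PiLp.inner_apply, RCLike.inner_apply, conj_trivial,
      WithLp.equiv_symm_apply, WithLp.ofLp_toLp]
  have hadj : ∀ i j : Fin n, A i j = if KC m i.val j.val then (1:ℝ) else 0 := by
    intro i j
    rw [hA, SimpleGraph.adjMatrix_apply, hG]
    convert if_congr ?_ rfl rfl
    rw [SimpleGraph.fromRel_adj]
    have hne : i ≠ j ↔ (i:ℕ) ≠ (j:ℕ) := by rw [Ne, Fin.ext_iff]
    unfold KC
    rw [hne]
  have hS : (inner ℝ (T x₀) (x₀ : EuclideanSpace ℝ (Fin n)) : ℝ)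
      = ∑ a ∈ Finset.range (2*m), ∑ b ∈ Finset.range (2*m), KF m a b := by
    rw [hinner]
    have step : ∀ i : Fin n, (A.mulVec w) i * w i = ∑ j : Fin n, KF m i.val j.val := by
      intro i
      simp only [Matrix.mulVec, dotProduct]
      rw [Finset.sum_mul]
      refine Finset.sum_congr rfl fun j _ => ?_
      rw [hadj i j]
      unfold KF
      simp only [hw]
      all_goals ring
    rw [Finset.sum_congr rfl (fun i _ => step i)]
    have conv1 : ∀ a : ℕ, ∑ j : Fin n, KF m a j.val = ∑ b ∈ Finset.range n, KF m a b :=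
      fun a => Fin.sum_univ_eq_sum_range (fun b => KF m a b) n
    calc ∑ i : Fin n, ∑ j : Fin n, KF m i.val j.val
        = ∑ i : Fin n, (fun a => ∑ b ∈ Finset.range n, KF m a b) i.val :=
          Finset.sum_congr rfl fun i _ => conv1 _
      _ = ∑ a ∈ Finset.range n, ∑ b ∈ Finset.range n, KF m a b :=
          Fin.sum_univ_eq_sum_range (fun a => ∑ b ∈ Finset.range n, KF m a b) n
      _ = ∑ a ∈ Finset.range (2*m), ∑ b ∈ Finset.range (2*m), KF m a b := by rw [← hnm]
  have hN : ‖x₀‖ ^ 2 = ∑ a ∈ Finset.range (2*m), Kw m a * Kw m a := by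
    rw [hnorm]
    calc ∑ i : Fin n, w i * w i
        = ∑ a ∈ Finset.range n, Kw m a * Kw m a :=
          Fin.sum_univ_eq_sum_range (fun a => Kw m a * Kw m a) n
      _ = ∑ a ∈ Finset.range (2*m), Kw m a * Kw m a := by rw [← hnm]
  have hM : (2:ℝ) ≤ (m:ℝ) := by exact_mod_cast hm2
  have hNpos : (0:ℝ) < ((m:ℝ)+1)*(m:ℝ)^2 + ((m:ℝ)-1)*((m:ℝ)+1)^2 := by nlinarith
  have hn2 : (n:ℝ) / 2 = (m:ℝ) := by
    rw [hnm]; push_cast; ring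
  have final : (n:ℝ)/2 < RCLike.re (inner ℝ (T x₀) (x₀ : EuclideanSpace ℝ (Fin n)) : ℝ) / ‖x₀‖ ^ 2 := by
    have hre : RCLike.re (inner ℝ (T x₀) (x₀ : EuclideanSpace ℝ (Fin n)) : ℝ)
        = (inner ℝ (T x₀) (x₀ : EuclideanSpace ℝ (Fin n)) : ℝ) := rfl
    rw [hre, hS, hN, sum_KF m hm2, sum_w_sq m hm2, hn2, lt_div_iff₀ hNpos]
    nlinarith
  linarith
end

section
/- Let n ≥ 4 be even and let H be the graph obtained from K_{n/2,n/2} by adding an edge e₁ inside one part and deleting an edge e₂ between the parts incident to e₁. Then λ(H) > n/2. -/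
open Finset in
private lemma fin_double_sum {n : ℕ} (F : ℕ → ℕ → ℝ) :
    ∑ u : Fin n, ∑ v : Fin n, F u.val v.val
      = ∑ i ∈ Finset.range n, ∑ j ∈ Finset.range n, F i j := by
  rw [← Fin.sum_univ_eq_sum_range (fun i => ∑ j ∈ Finset.range n, F i j) n]
  exact Finset.sum_congr rfl fun u _ => Fin.sum_univ_eq_sum_range (fun j => F u.val j) n

set_option maxHeartbeats 2000000 in
open Finset Matrix in
open scoped Classical in
/-- For even `n ≥ 4`, the graph `H` obtained from `K_{n/2,n/2}` (parts `{v : v < n/2}` and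
its complement in `Fin n`) by adding the edge `e₁ = {0,1}` inside one part and deleting the
cross-edge `e₂ = {0, n/2}` incident to `e₁` has spectral radius greater than `n/2`. -/
theorem spectral_radius_Kplusminus_even (n : ℕ) (hn : 4 ≤ n) (heven : Even n)
    (G : SimpleGraph (Fin n))
    (hG : G = SimpleGraph.fromRel
      (fun u v => ((u.val < n / 2 ∧ n / 2 ≤ v.val) ∧ ¬(u.val = 0 ∧ v.val = n / 2)) ∨
        (u.val ≤ 1 ∧ v.val ≤ 1)))
    (l : ℝ)
    (hl : Module.End.HasEigenvalue (Matrix.toLin' (G.adjMatrix ℝ)) l)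
    (hmax : ∀ μ : ℝ, Module.End.HasEigenvalue (Matrix.toLin' (G.adjMatrix ℝ)) μ → μ ≤ l) :
    l > (n : ℝ) / 2 := by
  classical
  set m : ℕ := n / 2 with hmdef
  have hnm : n = 2 * m := by
    obtain ⟨r, hr⟩ := heven; omega
  have hm : 2 ≤ m := by omega
  set M : ℝ := (m : ℝ) with hM
  have hM2 : (2:ℝ) ≤ M := by rw [hM]; exact_mod_cast hm
  have hnM : (n : ℝ) = 2 * M := by rw [hM, hnm]; push_cast; ring
  set A : Matrix (Fin n) (Fin n) ℝ := G.adjMatrix ℝ with hA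
  have hAH : A.IsHermitian := by
    rw [Matrix.IsHermitian]
    ext i j
    simp [hA, Matrix.conjTranspose_apply, SimpleGraph.adj_comm]
  set T : EuclideanSpace ℝ (Fin n) →ₗ[ℝ] EuclideanSpace ℝ (Fin n) := Matrix.toEuclideanLin A with hT
  have hTsymm : T.IsSymmetric := Matrix.isHermitian_iff_isSymmetric.mp hAH
  haveI : Nontrivial (EuclideanSpace ℝ (Fin n)) := by
    haveI : NeZero n := ⟨by omega⟩
    infer_instance
  have key := hTsymm.hasEigenvalue_iSup_of_finiteDimensional
  set f : {x : EuclideanSpace ℝ (Fin n) // x ≠ 0} → ℝ :=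
    fun x => RCLike.re (inner ℝ (T x) (x : EuclideanSpace ℝ (Fin n)))
      / ‖(x : EuclideanSpace ℝ (Fin n))‖ ^ 2 with hf
  -- the sup is at most l
  have hμl : (⨆ x, f x) ≤ l := by
    refine hmax _ ?_
    obtain ⟨v, hv⟩ := key.exists_hasEigenvector
    refine Module.End.hasEigenvalue_of_hasEigenvector
      (x := (WithLp.linearEquiv 2 ℝ (Fin n → ℝ)) v) ⟨?_, ?_⟩
    · rw [Module.End.mem_eigenspace_iff]
      have hv1 : T v = (⨆ x, f x) • v := by
        have := hv.apply_eq_smul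
        simpa [RCLike.ofReal_real_eq_id] using this
      have h2 : Matrix.toLin' A ((WithLp.linearEquiv 2 ℝ (Fin n → ℝ)) v)
          = (WithLp.linearEquiv 2 ℝ (Fin n → ℝ)) (T v) := rfl
      rw [h2, hv1, _root_.map_smul]
    · simpa using hv.right
  -- boundedness of the Rayleigh quotients
  have hbdd : BddAbove (Set.range f) := by
    set T' : EuclideanSpace ℝ (Fin n) →L[ℝ] EuclideanSpace ℝ (Fin n) :=
      LinearMap.toContinuousLinearMap T with hT'
    refine ⟨‖T'‖, ?_⟩
    rintro r ⟨⟨x, hx⟩, rfl⟩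
    have hxn : 0 < ‖x‖ ^ 2 := by
      have := norm_pos_iff.mpr hx
      positivity
    rw [hf]
    simp only
    rw [div_le_iff₀ hxn]
    have h1 : inner ℝ (T x) x ≤ ‖T x‖ * ‖x‖ := real_inner_le_norm _ _
    have h2 : ‖T x‖ ≤ ‖T'‖ * ‖x‖ := T'.le_opNorm x
    have h3 : RCLike.re (inner ℝ (T x) x) = inner ℝ (T x) x := rfl
    rw [h3]
    nlinarith [norm_nonneg x, norm_nonneg (T x)]
  -- the test vector
  set y : ℕ → ℝ := fun i => if i = 1 then M + 1 else M with hy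
  set x0 : Fin n → ℝ := fun u => y u.val with hx0
  have hsingle : ∀ (g : ℕ → ℝ) (a : ℕ), a ∈ range n → ∑ i ∈ range n, (if i = a then g i else 0) = g a := by
    intro g a ha
    rw [Finset.sum_eq_single_of_mem a ha]
    · rw [if_pos rfl]
    · intro b _ hb; rw [if_neg hb]
  -- sums of y
  have hS1 : ∑ i ∈ range m, y i = M * M + 1 := by
    have h1 : ∀ i ∈ range m, y i = M + (if i = 1 then (1:ℝ) else 0) := by
      intro i _
      by_cases h : i = 1
      · simp only [hy, if_pos h] <;> ring
      · simp only [hy, if_neg h] <;> ring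
    have h2 : ∑ i ∈ range m, (if i = 1 then (1:ℝ) else 0) = 1 := by
      rw [Finset.sum_eq_single_of_mem 1 (Finset.mem_range.mpr (by omega))]
      · rw [if_pos rfl]
      · intro b _ hb; rw [if_neg hb]
    rw [Finset.sum_congr rfl h1, Finset.sum_add_distrib, Finset.sum_const, h2,
      Finset.card_range, nsmul_eq_mul, hM]
  have hS2 : ∑ i ∈ Finset.Ico m n, y i = M * M := by
    have h1 : ∀ i ∈ Finset.Ico m n, y i = M := by
      intro i hi; rw [Finset.mem_Ico] at hi; rw [hy]; exact if_neg (by omega)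
    rw [Finset.sum_congr rfl h1, Finset.sum_const, Nat.card_Ico, nsmul_eq_mul]
    have h2 : n - m = m := by omega
    rw [h2, hM]
  have hfilt1 : (range n).filter (fun i => i < m) = range m := by
    ext i; simp only [Finset.mem_filter, Finset.mem_range]; omega
  have hfilt2 : (range n).filter (fun j => m ≤ j) = Finset.Ico m n := by
    ext i; simp only [Finset.mem_filter, Finset.mem_range, Finset.mem_Ico]; omega
  have hSlt : ∑ i ∈ range n, (if i < m then y i else 0) = M * M + 1 := by
    rw [← Finset.sum_filter, hfilt1, hS1]
  have hSge : ∑ j ∈ range n, (if m ≤ j then y j else 0) = M * M := by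
    rw [← Finset.sum_filter, hfilt2, hS2]
  have hy0 : y 0 = M := by rw [hy]; exact if_neg (by omega)
  have hy1 : y 1 = M + 1 := by rw [hy]; exact if_pos rfl
  have hym : y m = M := by rw [hy]; exact if_neg (by omega)
  -- single point double sums
  have hpt : ∀ (a b : ℕ), a < n → b < n → ∑ i ∈ range n, ∑ j ∈ range n,
      (if i = a ∧ j = b then y i * y j else 0) = y a * y b := by
    intro a b ha hb
    have h1 : ∀ i ∈ range n, ∀ j ∈ range n, (if i = a ∧ j = b then y i * y j else 0)
        = (if i = a then y i else 0) * (if j = b then y j else 0) := by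
      intro i _ j _; split_ifs <;> first | ring1 | (exfalso; omega)
    rw [Finset.sum_congr rfl (fun i hi => Finset.sum_congr rfl (fun j hj => h1 i hi j hj)),
      ← Finset.sum_mul_sum, hsingle y a (Finset.mem_range.mpr ha),
      hsingle y b (Finset.mem_range.mpr hb)]
  have hB : ∑ i ∈ range n, ∑ j ∈ range n, (if i < m ∧ m ≤ j then y i * y j else 0)
      = (M*M+1)*(M*M) := by
    have h1 : ∀ i ∈ range n, ∀ j ∈ range n, (if i < m ∧ m ≤ j then y i * y j else 0)
        = (if i < m then y i else 0) * (if m ≤ j then y j else 0) := by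
      intro i _ j _; split_ifs <;> first | ring1 | (exfalso; omega)
    rw [Finset.sum_congr rfl (fun i hi => Finset.sum_congr rfl (fun j hj => h1 i hi j hj)),
      ← Finset.sum_mul_sum, hSlt, hSge]
  have hB' : ∑ i ∈ range n, ∑ j ∈ range n, (if j < m ∧ m ≤ i then y j * y i else 0)
      = (M*M)*(M*M+1) := by
    have h1 : ∀ i ∈ range n, ∀ j ∈ range n, (if j < m ∧ m ≤ i then y j * y i else 0)
        = (if m ≤ i then y i else 0) * (if j < m then y j else 0) := by
      intro i _ j _; split_ifs <;> first | ring1 | (exfalso; omega)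
    rw [Finset.sum_congr rfl (fun i hi => Finset.sum_congr rfl (fun j hj => h1 i hi j hj)),
      ← Finset.sum_mul_sum, hSlt, hSge]
  -- the Rayleigh numerator
  have hQ : (A *ᵥ x0) ⬝ᵥ x0 = 2*M^4 + 2*M^2 + 2*M := by
    have hdot : (A *ᵥ x0) ⬝ᵥ x0 = ∑ u : Fin n, ∑ v : Fin n, A u v * x0 v * x0 u := by
      simp [dotProduct, Matrix.mulVec, Finset.sum_mul]
    rw [hdot]
    have hsplit : ∀ u v : Fin n, A u v * x0 v * x0 u =
        ((if u.val < m ∧ m ≤ v.val then y u.val * y v.val else 0)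
          - (if u.val = 0 ∧ v.val = m then y u.val * y v.val else 0))
        + ((if v.val < m ∧ m ≤ u.val then y v.val * y u.val else 0)
          - (if v.val = 0 ∧ u.val = m then y v.val * y u.val else 0))
        + ((if u.val = 0 ∧ v.val = 1 then y u.val * y v.val else 0)
          + (if u.val = 1 ∧ v.val = 0 then y u.val * y v.val else 0)) := by
      intro u v
      have hu := u.isLt; have hv := v.isLt
      rw [hA, SimpleGraph.adjMatrix_apply, hG, SimpleGraph.fromRel_adj]
      simp only [hx0, ne_eq, Fin.ext_iff]
      split_ifs <;> first | ring1 | (exfalso; omega)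
    rw [Finset.sum_congr rfl (fun u _ => Finset.sum_congr rfl (fun v _ => hsplit u v))]
    rw [fin_double_sum (fun i j =>
        ((if i < m ∧ m ≤ j then y i * y j else 0) - (if i = 0 ∧ j = m then y i * y j else 0))
        + ((if j < m ∧ m ≤ i then y j * y i else 0) - (if j = 0 ∧ i = m then y j * y i else 0))
        + ((if i = 0 ∧ j = 1 then y i * y j else 0) + (if i = 1 ∧ j = 0 then y i * y j else 0)))]
    simp only [Finset.sum_add_distrib, Finset.sum_sub_distrib]
    have hD : ∑ i ∈ range n, ∑ j ∈ range n, (if i = 0 ∧ j = m then y i * y j else 0)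
        = M * M := by rw [hpt 0 m (by omega) (by omega), hy0, hym]
    have hD' : ∑ i ∈ range n, ∑ j ∈ range n, (if j = 0 ∧ i = m then y j * y i else 0)
        = M * M := by
      have h1 : ∀ i ∈ range n, ∀ j ∈ range n, (if j = 0 ∧ i = m then y j * y i else 0)
          = (if i = m ∧ j = 0 then y i * y j else 0) := by
        intro i _ j _; split_ifs <;> first | ring1 | (exfalso; omega)
      rw [Finset.sum_congr rfl (fun i hi => Finset.sum_congr rfl (fun j hj => h1 i hi j hj)),
        hpt m 0 (by omega) (by omega), hy0, hym]
    rw [hB, hB', hD, hD', hpt 0 1 (by omega) (by omega), hpt 1 0 (by omega) (by omega),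
      hy0, hy1]
    ring
  -- the Rayleigh denominator
  have hN : x0 ⬝ᵥ x0 = 2*M^3 + 2*M + 1 := by
    have hdot : x0 ⬝ᵥ x0 = ∑ i ∈ range n, y i * y i := by
      rw [dotProduct]
      simp only [hx0]
      exact Fin.sum_univ_eq_sum_range (fun i => y i * y i) n
    rw [hdot]
    have h1 : ∀ i ∈ range n, y i * y i = M*M + (if i = 1 then 2*M+1 else 0) := by
      intro i _
      by_cases h : i = 1
      · simp only [hy, if_pos h] <;> ring
      · simp only [hy, if_neg h] <;> ring
    have h2 : ∑ i ∈ range n, (if i = 1 then 2*M+1 else 0) = 2*M+1 := by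
      rw [Finset.sum_eq_single_of_mem 1 (Finset.mem_range.mpr (by omega))]
      · rw [if_pos rfl]
      · intro b _ hb; rw [if_neg hb]
    rw [Finset.sum_congr rfl h1, Finset.sum_add_distrib, Finset.sum_const, h2,
      Finset.card_range, nsmul_eq_mul, hnM]
    ring
  -- the test vector in EuclideanSpace
  set xE : EuclideanSpace ℝ (Fin n) := (WithLp.equiv 2 (Fin n → ℝ)).symm x0 with hxE
  have hxEne : xE ≠ 0 := by
    intro h
    have h0 : x0 = 0 := by
      have := congrArg (WithLp.equiv 2 (Fin n → ℝ)) h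
      simpa [hxE] using this
    have h1 : x0 ⟨1, by omega⟩ = 0 := by rw [h0]; rfl
    have h2 : x0 ⟨1, by omega⟩ = M + 1 := by rw [hx0]; exact hy1
    rw [h1] at h2
    linarith
  have e1 : inner ℝ (T xE) xE = (A *ᵥ x0) ⬝ᵥ x0 := by
    rw [hT, hxE, EuclideanSpace.inner_eq_star_dotProduct]
    simp [dotProduct, mul_comm]
  have e2 : ‖xE‖^2 = x0 ⬝ᵥ x0 := by
    rw [← real_inner_self_eq_norm_sq, hxE, EuclideanSpace.inner_eq_star_dotProduct]
    simp [dotProduct]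
  have hNpos : (0:ℝ) < 2*M^3 + 2*M + 1 := by nlinarith [hM2]
  have hfx : f ⟨xE, hxEne⟩ = (2*M^4 + 2*M^2 + 2*M) / (2*M^3 + 2*M + 1) := by
    rw [hf]
    simp only
    rw [show RCLike.re (inner ℝ (T xE) xE) = inner ℝ (T xE) xE from rfl, e1, e2, hQ, hN]
  have hchain : (2*M^4 + 2*M^2 + 2*M) / (2*M^3 + 2*M + 1) ≤ l := by
    calc (2*M^4 + 2*M^2 + 2*M) / (2*M^3 + 2*M + 1) = f ⟨xE, hxEne⟩ := hfx.symm
      _ ≤ ⨆ x, f x := le_ciSup hbdd _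
      _ ≤ l := hμl
  have hfinal : (n:ℝ)/2 < (2*M^4 + 2*M^2 + 2*M) / (2*M^3 + 2*M + 1) := by
    rw [hnM]
    have : (2*M)/2 = M := by ring
    rw [this, lt_div_iff₀ hNpos]
    nlinarith [hM2]
  linarith
end

section
/- Let n ≥ 5 be odd and let H be the graph obtained from K_{(n+1)/2,(n−1)/2} by adding an edge e₁ inside the part of size (n+1)/2 and deleting a cross-edge e₂ incident to e₁. Then λ(H) > (1/2)√(n²−1) = λ(T_{n,2}). -/
set_option maxHeartbeats 1600000 in
open scoped Classical in
/-- For odd `n ≥ 5`, the graph `H` obtained from `K_{(n+1)/2,(n−1)/2}` (parts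
`{v : v < (n+1)/2}` and its complement in `Fin n`) by adding the edge `e₁ = {0,1}` inside
the part of size `(n+1)/2` and deleting the cross-edge `e₂ = {0, (n+1)/2}` incident to `e₁`
has spectral radius greater than `(1/2)√(n²−1) = λ(T_{n,2})`. -/
theorem spectral_radius_Kplusminus_odd (n : ℕ) (hn : 5 ≤ n) (hodd : Odd n)
    (G : SimpleGraph (Fin n))
    (hG : G = SimpleGraph.fromRel
      (fun u v => ((u.val < (n + 1) / 2 ∧ (n + 1) / 2 ≤ v.val) ∧
          ¬(u.val = 0 ∧ v.val = (n + 1) / 2)) ∨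
        (u.val ≤ 1 ∧ v.val ≤ 1)))
    (l : ℝ)
    (hl : Module.End.HasEigenvalue (Matrix.toLin' (G.adjMatrix ℝ)) l)
    (hmax : ∀ μ : ℝ, Module.End.HasEigenvalue (Matrix.toLin' (G.adjMatrix ℝ)) μ → μ ≤ l) :
    l > Real.sqrt ((n : ℝ) ^ 2 - 1) / 2 := by
  classical
  obtain ⟨k, hk⟩ := hodd
  have hk2 : 2 ≤ k := by omega
  have hkr : (2:ℝ) ≤ (k:ℝ) := by exact_mod_cast hk2
  haveI : NeZero n := ⟨by omega⟩
  haveI : Nontrivial (EuclideanSpace ℝ (Fin n)) := by infer_instance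
  set A : Matrix (Fin n) (Fin n) ℝ := G.adjMatrix ℝ with hA
  -- spectral framework
  have hherm : A.IsHermitian := by
    unfold Matrix.IsHermitian
    rw [Matrix.conjTranspose]
    ext i j
    simp [Matrix.map_apply, hA]
  have hsymm : (Matrix.toEuclideanLin A).IsSymmetric :=
    Matrix.isHermitian_iff_isSymmetric.mp hherm
  set T := Matrix.toEuclideanLin A with hT
  have key := hsymm.hasEigenvalue_iSup_of_finiteDimensional
  set μ : ℝ := (⨆ x : { x : EuclideanSpace ℝ (Fin n) // x ≠ 0 },
      RCLike.re (inner ℝ (T x) (x : EuclideanSpace ℝ (Fin n)) : ℝ) /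
        ‖(x : EuclideanSpace ℝ (Fin n))‖ ^ 2 : ℝ) with hμ
  have hev : Module.End.HasEigenvalue (Matrix.toLin' A) μ := by
    obtain ⟨v, hv, hvne⟩ := key.exists_hasEigenvector
    exact Module.End.hasEigenvalue_of_hasEigenvector (x := WithLp.ofLp v)
      ⟨by
        rw [Module.End.mem_eigenspace_iff] at hv ⊢
        have := congrArg WithLp.ofLp hv
        simpa [hT] using this, by simpa using hvne⟩
  have hμl : μ ≤ l := hmax μ hev
  -- Rayleigh quotients are bounded above
  have hbdd : BddAbove (Set.range fun x : { x : EuclideanSpace ℝ (Fin n) // x ≠ 0 } =>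
      RCLike.re (inner ℝ (T x) (x : EuclideanSpace ℝ (Fin n)) : ℝ) /
        ‖(x : EuclideanSpace ℝ (Fin n))‖ ^ 2) := by
    refine ⟨‖LinearMap.toContinuousLinearMap T‖, ?_⟩
    rintro y ⟨⟨z, hz⟩, rfl⟩
    set T' := LinearMap.toContinuousLinearMap T with hT'
    have hzn : 0 < ‖z‖ := norm_pos_iff.mpr hz
    have hz' : 0 < ‖z‖ ^ 2 := by positivity
    rw [div_le_iff₀ hz']
    calc RCLike.re (inner ℝ (T z) z : ℝ) ≤ ‖T z‖ * ‖z‖ := by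
          simpa using real_inner_le_norm (T z) z
      _ ≤ ‖T'‖ * ‖z‖ * ‖z‖ := by
          have h1 : ‖T z‖ ≤ ‖T'‖ * ‖z‖ := T'.le_opNorm z
          nlinarith [norm_nonneg (T z)]
      _ = ‖T'‖ * ‖z‖ ^ 2 := by ring
  -- the test vector
  set X : ℕ → ℝ := fun i => if 2 ≤ i ∧ i ≤ k then (4*k-2:ℝ)
    else if i = k+1 then 4*k-3 else 4*k with hX
  set x₀ : EuclideanSpace ℝ (Fin n) := WithLp.toLp 2 (fun u : Fin n => X u.val) with hx₀
  have hx₀ne : x₀ ≠ 0 := by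
    intro h
    have h0 : x₀ ⟨0, by omega⟩ = 0 := by rw [h]; rfl
    rw [hx₀] at h0
    simp only [hX] at h0
    rw [if_neg (by omega : ¬(2 ≤ 0 ∧ 0 ≤ k)), if_neg (by omega : ¬(0 = k+1))] at h0
    have : (4:ℝ)*k ≥ 8 := by nlinarith
    linarith [h0.symm.le]
  -- entrywise identity for the adjacency matrix
  have hkey : ∀ u v : Fin n, A u v =
      (if u.val ≤ k then (1:ℝ) else 0) * (if v.val ≤ k then (0:ℝ) else 1)
      + (if u.val ≤ k then (0:ℝ) else 1) * (if v.val ≤ k then (1:ℝ) else 0)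
      - (if u.val = 0 then (1:ℝ) else 0) * (if v.val = k+1 then (1:ℝ) else 0)
      - (if u.val = k+1 then (1:ℝ) else 0) * (if v.val = 0 then (1:ℝ) else 0)
      + (if u.val = 0 then (1:ℝ) else 0) * (if v.val = 1 then (1:ℝ) else 0)
      + (if u.val = 1 then (1:ℝ) else 0) * (if v.val = 0 then (1:ℝ) else 0) := by
    intro u v
    have hh : (n+1)/2 = k+1 := by omega
    rw [hA, hG]
    simp only [SimpleGraph.adjMatrix_apply, SimpleGraph.fromRel_adj, ne_eq, Fin.ext_iff, hh]
    split_ifs <;> (try norm_num) <;> omega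
  -- sum machinery
  have hsplit : ∀ F : ℕ → ℝ, ∑ u : Fin n, F u.val =
      F 0 + F 1 + (∑ i ∈ Finset.Ico 2 (k+1), F i) + F (k+1)
        + ∑ i ∈ Finset.Ico (k+2) n, F i := by
    intro F
    rw [Fin.sum_univ_eq_sum_range, Finset.range_eq_Ico]
    rw [← Finset.sum_Ico_consecutive F (by omega : 0 ≤ k+2) (by omega : k+2 ≤ n)]
    rw [← Finset.sum_Ico_consecutive F (by omega : 0 ≤ k+1) (by omega : k+1 ≤ k+2)]
    rw [← Finset.sum_Ico_consecutive F (by omega : 0 ≤ 2) (by omega : 2 ≤ k+1)]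
    have h1 : Finset.Ico 0 2 = {0, 1} := by decide
    have h2 : Finset.Ico (k+1) (k+2) = {k+1} := by
      ext j; simp only [Finset.mem_Ico, Finset.mem_singleton]; omega
    rw [h1, h2, Finset.sum_singleton]
    rw [Finset.sum_insert (by decide), Finset.sum_singleton]
  have hconst : ∀ (a b : ℕ) (c : ℝ) (F : ℕ → ℝ), (∀ i, a ≤ i → i < b → F i = c) →
      ∑ i ∈ Finset.Ico a b, F i = (b - a : ℕ) * c := by
    intro a b c F hF
    rw [Finset.sum_congr rfl (fun i hi => hF i (Finset.mem_Ico.mp hi).1 (Finset.mem_Ico.mp hi).2),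
      Finset.sum_const, Nat.card_Ico, nsmul_eq_mul]
  have hcard1 : ((k+1-2 : ℕ) : ℝ) = (k:ℝ) - 1 := by
    have h : (k+1-2 : ℕ) = k - 1 := by omega
    rw [h, Nat.cast_sub (by omega : 1 ≤ k)]; norm_num
  have hcard2 : ((n-(k+2) : ℕ) : ℝ) = (k:ℝ) - 1 := by
    have h : (n-(k+2) : ℕ) = k - 1 := by omega
    rw [h, Nat.cast_sub (by omega : 1 ≤ k)]; norm_num
  -- point values of X
  have hX0 : X 0 = 4*(k:ℝ) := by
    simp only [hX]; split_ifs <;> first | ring1 | contradiction | (exfalso; omega)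
  have hX1 : X 1 = 4*(k:ℝ) := by
    simp only [hX]; split_ifs <;> first | ring1 | contradiction | (exfalso; omega)
  have hXh : X (k+1) = 4*(k:ℝ)-3 := by
    simp only [hX]; split_ifs <;> first | ring1 | contradiction | (exfalso; omega)
  have hXmid : ∀ i : ℕ, 2 ≤ i → i < k+1 → X i = 4*(k:ℝ)-2 := by
    intro i h1 h2
    simp only [hX]; split_ifs <;> first | ring1 | contradiction | (exfalso; omega)
  have hXhi : ∀ i : ℕ, k+2 ≤ i → X i = 4*(k:ℝ) := by
    intro i h1
    simp only [hX]; split_ifs <;> first | ring1 | contradiction | (exfalso; omega)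
  -- the six scalar sums
  have hSa : ∑ u : Fin n, (if u.val ≤ k then (1:ℝ) else 0) * X u.val
      = 8*(k:ℝ) + ((k:ℝ)-1)*(4*k-2) := by
    have h := hsplit (fun i => (if i ≤ k then (1:ℝ) else 0) * X i)
    rw [hconst 2 (k+1) (4*(k:ℝ)-2) _ (fun i h1 h2 => by
        show (if i ≤ k then (1:ℝ) else 0) * X i = _
        rw [hXmid i h1 h2, if_pos (by omega : i ≤ k)]; ring),
      hconst (k+2) n 0 _ (fun i h1 h2 => by
        show (if i ≤ k then (1:ℝ) else 0) * X i = _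
        rw [hXhi i h1, if_neg (by omega : ¬ i ≤ k)]; ring)] at h
    simp only [hX0, hX1, hXh, hcard1, hcard2] at h
    rw [h]
    split_ifs <;> first | ring1 | contradiction | (exfalso; omega)
  have hSb : ∑ u : Fin n, (if u.val ≤ k then (0:ℝ) else 1) * X u.val
      = (4*(k:ℝ)-3) + ((k:ℝ)-1)*(4*k) := by
    have h := hsplit (fun i => (if i ≤ k then (0:ℝ) else 1) * X i)
    rw [hconst 2 (k+1) 0 _ (fun i h1 h2 => by
        show (if i ≤ k then (0:ℝ) else 1) * X i = _
        rw [if_pos (by omega : i ≤ k)]; ring),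
      hconst (k+2) n (4*(k:ℝ)) _ (fun i h1 h2 => by
        show (if i ≤ k then (0:ℝ) else 1) * X i = _
        rw [hXhi i h1, if_neg (by omega : ¬ i ≤ k)]; ring)] at h
    simp only [hX0, hX1, hXh, hcard1, hcard2] at h
    rw [h]
    split_ifs <;> first | ring1 | contradiction | (exfalso; omega)
  have hS0 : ∑ u : Fin n, (if u.val = 0 then (1:ℝ) else 0) * X u.val = 4*(k:ℝ) := by
    have h := hsplit (fun i => (if i = 0 then (1:ℝ) else 0) * X i)
    rw [hconst 2 (k+1) 0 _ (fun i h1 h2 => by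
        show (if i = 0 then (1:ℝ) else 0) * X i = _
        rw [if_neg (by omega : ¬ i = 0)]; ring),
      hconst (k+2) n 0 _ (fun i h1 h2 => by
        show (if i = 0 then (1:ℝ) else 0) * X i = _
        rw [if_neg (by omega : ¬ i = 0)]; ring)] at h
    simp only [hX0, hX1, hXh, hcard1, hcard2] at h
    rw [h]
    split_ifs <;> first | ring1 | contradiction | (exfalso; omega)
  have hS1 : ∑ u : Fin n, (if u.val = 1 then (1:ℝ) else 0) * X u.val = 4*(k:ℝ) := by
    have h := hsplit (fun i => (if i = 1 then (1:ℝ) else 0) * X i)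
    rw [hconst 2 (k+1) 0 _ (fun i h1 h2 => by
        show (if i = 1 then (1:ℝ) else 0) * X i = _
        rw [if_neg (by omega : ¬ i = 1)]; ring),
      hconst (k+2) n 0 _ (fun i h1 h2 => by
        show (if i = 1 then (1:ℝ) else 0) * X i = _
        rw [if_neg (by omega : ¬ i = 1)]; ring)] at h
    simp only [hX0, hX1, hXh, hcard1, hcard2] at h
    rw [h]
    split_ifs <;> first | ring1 | contradiction | (exfalso; omega)
  have hSh : ∑ u : Fin n, (if u.val = k+1 then (1:ℝ) else 0) * X u.val = 4*(k:ℝ)-3 := by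
    have h := hsplit (fun i => (if i = k+1 then (1:ℝ) else 0) * X i)
    rw [hconst 2 (k+1) 0 _ (fun i h1 h2 => by
        show (if i = k+1 then (1:ℝ) else 0) * X i = _
        rw [if_neg (by omega : ¬ i = k+1)]; ring),
      hconst (k+2) n 0 _ (fun i h1 h2 => by
        show (if i = k+1 then (1:ℝ) else 0) * X i = _
        rw [if_neg (by omega : ¬ i = k+1)]; ring)] at h
    simp only [hX0, hX1, hXh, hcard1, hcard2] at h
    rw [h]
    split_ifs <;> first | ring1 | contradiction | (exfalso; omega)
  have hNS : ∑ u : Fin n, X u.val * X u.val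
      = 2*(4*(k:ℝ))^2 + ((k:ℝ)-1)*(4*k-2)^2 + (4*k-3)^2 + ((k:ℝ)-1)*(4*k)^2 := by
    have h := hsplit (fun i => X i * X i)
    rw [hconst 2 (k+1) ((4*(k:ℝ)-2)^2) _ (fun i h1 h2 => by
        show X i * X i = _
        rw [hXmid i h1 h2]; ring),
      hconst (k+2) n ((4*(k:ℝ))^2) _ (fun i h1 h2 => by
        show X i * X i = _
        rw [hXhi i h1]; ring)] at h
    simp only [hX0, hX1, hXh, hcard1, hcard2] at h
    rw [h]
    ring
  -- abbreviations for the values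
  set SaV : ℝ := 8*(k:ℝ) + ((k:ℝ)-1)*(4*k-2) with hSaV
  set SbV : ℝ := (4*(k:ℝ)-3) + ((k:ℝ)-1)*(4*k) with hSbV
  set NSV : ℝ := 2*(4*(k:ℝ))^2 + ((k:ℝ)-1)*(4*k-2)^2 + (4*k-3)^2 + ((k:ℝ)-1)*(4*k)^2 with hNSV
  set IV : ℝ := SaV*SbV + SbV*SaV - (4*(k:ℝ))*(4*(k:ℝ)-3) - (4*(k:ℝ)-3)*(4*(k:ℝ))
      + (4*(k:ℝ))*(4*(k:ℝ)) + (4*(k:ℝ))*(4*(k:ℝ)) with hIV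
  -- the quadratic form value
  have hTapp : ∀ u : Fin n, (T x₀) u = ∑ v : Fin n, A u v * x₀ v := fun u => rfl
  have hinner : RCLike.re (inner ℝ (T x₀) x₀ : ℝ) = IV := by
    have h1 : (inner ℝ (T x₀) x₀ : ℝ) = ∑ u : Fin n, (∑ v : Fin n, A u v * x₀ v) * x₀ u := by
      rw [PiLp.inner_apply]
      exact Finset.sum_congr rfl fun u _ => by rw [RCLike.inner_apply, hTapp u]; simp [mul_comm]
    rw [show RCLike.re (inner ℝ (T x₀) x₀ : ℝ) = (inner ℝ (T x₀) x₀ : ℝ) by simp, h1]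
    calc ∑ u : Fin n, (∑ v : Fin n, A u v * x₀ v) * x₀ u
        = ∑ u : Fin n, ∑ v : Fin n, A u v * x₀ v * x₀ u := by
          simp only [Finset.sum_mul]
      _ = ∑ u : Fin n, ∑ v : Fin n,
          (((if u.val ≤ k then (1:ℝ) else 0) * x₀ u) * ((if v.val ≤ k then (0:ℝ) else 1) * x₀ v)
          + ((if u.val ≤ k then (0:ℝ) else 1) * x₀ u) * ((if v.val ≤ k then (1:ℝ) else 0) * x₀ v)
          - ((if u.val = 0 then (1:ℝ) else 0) * x₀ u) * ((if v.val = k+1 then (1:ℝ) else 0) * x₀ v)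
          - ((if u.val = k+1 then (1:ℝ) else 0) * x₀ u) * ((if v.val = 0 then (1:ℝ) else 0) * x₀ v)
          + ((if u.val = 0 then (1:ℝ) else 0) * x₀ u) * ((if v.val = 1 then (1:ℝ) else 0) * x₀ v)
          + ((if u.val = 1 then (1:ℝ) else 0) * x₀ u) * ((if v.val = 0 then (1:ℝ) else 0) * x₀ v)) := by
          refine Finset.sum_congr rfl fun u _ => Finset.sum_congr rfl fun v _ => ?_
          rw [hkey u v]; ring
      _ = IV := by
          simp only [Finset.sum_add_distrib, Finset.sum_sub_distrib,
            ← Finset.sum_mul_sum]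
          have e : ∀ u : Fin n, x₀ u = X u.val := fun u => rfl
          simp only [e]
          rw [hSa, hSb, hS0, hS1, hSh]
  have hnorm : ‖x₀‖ ^ 2 = NSV := by
    rw [← real_inner_self_eq_norm_sq, PiLp.inner_apply]
    have : ∀ u : Fin n, (inner ℝ (x₀ u) (x₀ u) : ℝ) = X u.val * X u.val := fun u => by
      rw [RCLike.inner_apply]; simp; rfl
    rw [Finset.sum_congr rfl fun u _ => this u, hNS]
  -- positivity facts
  have hNSpos : 0 < NSV := by rw [hNSV]; nlinarith
  have hIVpos : 0 < IV := by rw [hIV, hSaV, hSbV]; nlinarith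
  -- Rayleigh bound
  have hray : IV / NSV ≤ μ := by
    have := le_ciSup hbdd ⟨x₀, hx₀ne⟩
    rwa [hinner, hnorm] at this
  -- final numeric inequality
  have hfin : Real.sqrt ((n : ℝ) ^ 2 - 1) / 2 < IV / NSV := by
    have hpos : 0 < IV / NSV := div_pos hIVpos hNSpos
    rw [div_lt_iff₀ (by norm_num : (0:ℝ) < 2),
      Real.sqrt_lt' (by positivity : (0:ℝ) < IV / NSV * 2)]
    have hncast : (n:ℝ) = 2*(k:ℝ)+1 := by rw [hk]; push_cast; ring
    rw [hncast, show (IV / NSV * 2)^2 = IV^2*4/NSV^2 by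
      rw [mul_pow, div_pow]; ring]
    rw [lt_div_iff₀ (by positivity : (0:ℝ) < NSV^2)]
    rw [hIV, hSaV, hSbV, hNSV]
    nlinarith [sq_nonneg ((k:ℝ)-2), pow_nonneg (by linarith : (0:ℝ) ≤ (k:ℝ)-2) 3,
      pow_nonneg (by linarith : (0:ℝ) ≤ (k:ℝ)-2) 4,
      pow_nonneg (by linarith : (0:ℝ) ≤ (k:ℝ)-2) 5]
  linarith [hfin, hray, hμl]
end
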